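/- arXiv:1911.02544 — 8 statements merged into one kernel-verified Lean document; each statement's English description precedes it below -/
import Mathlib

section
/- Let A₁, …, Aₙ be commutative rings and let B = A₁ × ⋯ × Aₙ be their finite direct product. Then B is an ISP-ring if and only if each Aᵢ is an ISP-ring. -/
/-- An ideal is *regular* if it contains a regular element (a non-zero-divisor). -/
def Ideal.IsRegularIdeal {A : Type*} [CommRing A] (I : Ideal A) : Prop :=
  ∃ a ∈ I, a ∈ nonZeroDivisors A

/-- An ideal is *invertible* if it is regular, finitely generated and locally principal. -/
def Ideal.IsInvertibleIdeal {A : Type*} [CommRing A] (J : Ideal A) : Prop :=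
  J.IsRegularIdeal ∧ J.FG ∧
    ∀ M : Ideal A, ∀ hM : M.IsMaximal,
      haveI := hM.isPrime
      (J.map (algebraMap A (Localization.AtPrime M))).IsPrincipal

/-- `I` can be written as an invertible ideal times a nonempty product of
proper radical ideals. -/
def Ideal.HasISPFactorization {A : Type*} [CommRing A] (I : Ideal A) : Prop :=
  ∃ (J : Ideal A) (L : List (Ideal A)), J.IsInvertibleIdeal ∧ L ≠ [] ∧
    (∀ H ∈ L, H ≠ ⊤ ∧ H.IsRadical) ∧ I = J * L.prod

/-- An ISP-ring: every proper regular ideal factors as an invertible ideal times a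
nonempty product of proper radical ideals. -/
def IsISPRing (A : Type*) [CommRing A] : Prop :=
  ∀ I : Ideal A, I ≠ ⊤ → I.IsRegularIdeal → I.HasISPFactorization

/-- A strongly ISP-ring: every proper ideal factors as an invertible ideal times a
nonempty product of proper radical ideals. -/
def IsStronglyISPRing (A : Type*) [CommRing A] : Prop :=
  ∀ I : Ideal A, I ≠ ⊤ → I.HasISPFactorization

/-- An ISP-domain: an integral domain in which every proper nonzero ideal factors as an
invertible ideal times a nonempty product of proper radical ideals. -/
def IsISPDomain (A : Type*) [CommRing A] : Prop :=
  IsDomain A ∧ ∀ I : Ideal A, I ≠ ⊤ → I ≠ ⊥ → I.HasISPFactorization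

/-! Over a finite index set, `Ideal.pi` identifies the ideals of `Π i, A i` with families of
ideals of the factors, compatibly with products, properness, regularity and radicality. The
maximal ideals of the product are pullbacks of maximal ideals of single factors, and localizing
there is localizing that factor, so invertibility is checked componentwise as well. Hence an
ISP-factorization of `pi (Pi.mulSingle i I)` projects to one of `I`, and conversely the
factorizations of the proper components of an ideal assemble into one of the ideal, each radical
factor of the `i`-th component being padded with `⊤` in the other coordinates. -/

open Function

theorem Pi.mem_nonZeroDivisors_iff {ι : Type*} {A : ι → Type*} [∀ i, CommRing (A i)]
    {x : ∀ i, A i} : x ∈ nonZeroDivisors (∀ i, A i) ↔ ∀ i, x i ∈ nonZeroDivisors (A i) := by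
  classical
  simp only [mem_nonZeroDivisors_iff_right]
  refine ⟨fun hx i c hc => ?_, fun hx y hy => funext fun i => hx i (y i) (congrFun hy i)⟩
  have hsingle : Pi.single i c * x = 0 := by rw [← Pi.single_mul_left, hc, Pi.single_zero]
  simpa using congrFun (hx _ hsingle) i

namespace Ideal

theorem isInvertibleIdeal_top {R : Type*} [CommRing R] : (⊤ : Ideal R).IsInvertibleIdeal := by
  refine ⟨⟨1, trivial, one_mem _⟩, fg_top R, fun M hM => ?_⟩
  rw [map_top]
  infer_instance

theorem isPrincipal_map_iff_of_bijective {R S : Type*} [CommRing R] [CommRing S] {f : R →+* S}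
    (hf : Bijective f) {I : Ideal R} : (I.map f).IsPrincipal ↔ I.IsPrincipal := by
  refine ⟨fun h => ?_, fun h => h.map_ringHom f⟩
  have := h.map_ringHom (RingEquiv.ofBijective f hf).symm
  rw [map_symm] at this
  convert this
  exact (comap_map_of_bijective f hf).symm

variable {ι : Type*} {A : ι → Type*} [∀ i, CommRing (A i)]

theorem pi_eq_top_iff {I : ∀ i, Ideal (A i)} : pi I = ⊤ ↔ ∀ i, I i = ⊤ := by
  simp only [eq_top_iff_one]
  rfl

theorem isRegularIdeal_pi_iff {I : ∀ i, Ideal (A i)} :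
    (pi I).IsRegularIdeal ↔ ∀ i, (I i).IsRegularIdeal := by
  refine ⟨fun ⟨a, ha, hreg⟩ i => ⟨a i, ha i, Pi.mem_nonZeroDivisors_iff.1 hreg i⟩, fun h => ?_⟩
  choose a ha hreg using h
  exact ⟨a, ha, Pi.mem_nonZeroDivisors_iff.2 hreg⟩

theorem isRadical_pi_iff {I : ∀ i, Ideal (A i)} : (pi I).IsRadical ↔ ∀ i, (I i).IsRadical := by
  classical
  refine ⟨fun h i a ⟨k, hk⟩ => ?_, fun h x ⟨k, hk⟩ i => h i ⟨k, hk i⟩⟩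
  -- the exponent `k + 1` avoids `Pi.single i a ^ 0 = 1`
  have hsingle : Pi.single i a ∈ pi I := h ⟨k + 1, fun j => ?_⟩
  · simpa using hsingle i
  rw [Pi.pow_apply]
  rcases eq_or_ne j i with rfl | hj
  · simpa [pow_succ] using mul_mem_right _ _ hk
  · simp [hj]

theorem isPrincipal_map_algebraMap_atPrime_comap_iff {i : ι} (P : Ideal (A i)) [P.IsPrime]
    (J : Ideal (∀ i, A i)) :
    (J.map (algebraMap _ (Localization.AtPrime (P.comap (Pi.evalRingHom A i))))).IsPrincipal ↔
      ((J.map (Pi.evalRingHom A i)).map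
        (algebraMap (A i) (Localization.AtPrime P))).IsPrincipal := by
  rw [map_map, ← Localization.AtPrime.mapPiEvalRingHom_comp_algebraMap, ← map_map,
    isPrincipal_map_iff_of_bijective (Localization.AtPrime.mapPiEvalRingHom_bijective P)]

section DecidableEq

variable [DecidableEq ι]

theorem forall_mulSingle_iff {p : ∀ i, Ideal (A i) → Prop} (hp : ∀ j, p j ⊤) {i : ι}
    {H : Ideal (A i)} : (∀ j, p j ((Pi.mulSingle i H : ∀ j, Ideal (A j)) j)) ↔ p i H := by
  refine ⟨fun h => by simpa using h i, fun h j => ?_⟩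
  rcases eq_or_ne j i with rfl | hj
  · simpa using h
  · simpa [hj, one_eq_top] using hp j

theorem pi_mulSingle_eq_top_iff {i : ι} {H : Ideal (A i)} : pi (Pi.mulSingle i H) = ⊤ ↔ H = ⊤ :=
  pi_eq_top_iff.trans (forall_mulSingle_iff (p := fun _ K => K = ⊤) fun _ => rfl)

theorem isRegularIdeal_pi_mulSingle_iff {i : ι} {H : Ideal (A i)} :
    (pi (Pi.mulSingle i H)).IsRegularIdeal ↔ H.IsRegularIdeal :=
  isRegularIdeal_pi_iff.trans (forall_mulSingle_iff fun _ => ⟨1, trivial, one_mem _⟩)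

theorem isRadical_pi_mulSingle_iff {i : ι} {H : Ideal (A i)} :
    (pi (Pi.mulSingle i H)).IsRadical ↔ H.IsRadical :=
  isRadical_pi_iff.trans (forall_mulSingle_iff fun _ _ _ => trivial)

end DecidableEq

section Finite

variable [Finite ι]

theorem pi_map_evalRingHom (I : Ideal (∀ i, A i)) : pi (fun i => I.map (Pi.evalRingHom A i)) = I :=
  piOrderIso.symm_apply_apply I

theorem pi_mul (I J : ∀ i, Ideal (A i)) : pi (I * J) = pi I * pi J := by
  rw [← pi_map_evalRingHom (pi I * pi J)]
  congr 1
  funext i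
  rw [Ideal.map_mul, map_evalRingHom_pi, map_evalRingHom_pi, Pi.mul_apply]

def piMonoidHom : (∀ i, Ideal (A i)) →* Ideal (∀ i, A i) where
  toFun := pi
  map_one' := (pi_eq_top_iff.2 fun _ => one_eq_top).trans one_eq_top.symm
  map_mul' := pi_mul

theorem fg_pi_iff {I : ∀ i, Ideal (A i)} : (pi I).FG ↔ ∀ i, (I i).FG := by
  classical
  cases nonempty_fintype ι
  refine ⟨fun h i => map_evalRingHom_pi (I := I) i ▸ h.map _, fun h => ?_⟩
  choose s hs using h
  refine ⟨Finset.univ.biUnion fun i => (s i).image (Pi.single i), le_antisymm ?_ fun x hx => ?_⟩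
  · rw [span_le]
    intro x hx
    simp only [Finset.coe_biUnion, Finset.coe_image, Set.mem_iUnion, Set.mem_image] at hx
    obtain ⟨i, -, t, ht, rfl⟩ := hx
    exact single_mem_pi (hs i ▸ subset_span ht)
  rw [← Finset.univ_sum_single x]
  refine Ideal.sum_mem _ fun i _ => ?_
  obtain ⟨c, -, hc⟩ := Submodule.mem_span_finset.1 ((hs i).symm ▸ hx i : x i ∈ span (s i))
  have hsum := map_sum (AddMonoidHom.single A i) (fun a => c a * a) (s i)
  simp only [AddMonoidHom.single_apply, Pi.single_mul] at hsum
  simp only [smul_eq_mul] at hc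
  rw [← hc, hsum]
  refine Ideal.sum_mem _ fun a ha => mul_mem_left _ _ (subset_span ?_)
  simp only [Finset.coe_biUnion, Finset.coe_image, Set.mem_iUnion, Set.mem_image]
  exact ⟨i, Finset.mem_coe.2 (Finset.mem_univ i), a, ha, rfl⟩

theorem IsMaximal.exists_comap_evalRingHom {M : Ideal (∀ i, A i)} (hM : M.IsMaximal) :
    ∃ i, ∃ P : Ideal (A i), P.IsMaximal ∧ M = P.comap (Pi.evalRingHom A i) := by
  obtain ⟨i, q, hq⟩ := PrimeSpectrum.exists_comap_evalRingHom_eq ⟨M, hM.isPrime⟩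
  have hMq : M = q.asIdeal.comap (Pi.evalRingHom A i) := congrArg PrimeSpectrum.asIdeal hq.symm
  have hqM : q.asIdeal = M.map (Pi.evalRingHom A i) := by
    rw [hMq, map_comap_of_surjective _ (surjective_eval i)]
  refine ⟨i, q.asIdeal, ?_, hMq⟩
  exact hqM ▸ (map_eq_top_or_isMaximal_of_surjective _ (surjective_eval i) hM).resolve_left
    (hqM ▸ q.2.ne_top)

theorem isInvertibleIdeal_pi_iff {J : ∀ i, Ideal (A i)} :
    (pi J).IsInvertibleIdeal ↔ ∀ i, (J i).IsInvertibleIdeal := by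
  simp only [IsInvertibleIdeal, isRegularIdeal_pi_iff, fg_pi_iff, forall_and]
  refine and_congr_right fun _ => and_congr_right fun _ => ⟨fun h i P hP => ?_, fun h M hM => ?_⟩
  · have := h _ hP.comap_piEvalRingHom
    rwa [isPrincipal_map_algebraMap_atPrime_comap_iff, map_evalRingHom_pi] at this
  · obtain ⟨i, P, hP, rfl⟩ := hM.exists_comap_evalRingHom
    rw [isPrincipal_map_algebraMap_atPrime_comap_iff, map_evalRingHom_pi]
    exact h i P hP

theorem IsInvertibleIdeal.map_evalRingHom {J : Ideal (∀ i, A i)} (hJ : J.IsInvertibleIdeal)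
    (i : ι) : (J.map (Pi.evalRingHom A i)).IsInvertibleIdeal :=
  (isInvertibleIdeal_pi_iff (J := fun j => J.map (Pi.evalRingHom A j))).1
    ((pi_map_evalRingHom J).symm ▸ hJ) i

theorem IsRadical.map_evalRingHom {H : Ideal (∀ i, A i)} (hH : H.IsRadical) (i : ι) :
    (H.map (Pi.evalRingHom A i)).IsRadical :=
  (isRadical_pi_iff (I := fun j => H.map (Pi.evalRingHom A j))).1
    ((pi_map_evalRingHom H).symm ▸ hH) i

end Finite

theorem prod_flatMap_map_pi_mulSingle [Fintype ι] [DecidableEq ι] (L : ∀ i, List (Ideal (A i))) :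
    ((Finset.univ : Finset ι).toList.flatMap fun i =>
      (L i).map fun H => pi (Pi.mulSingle i H)).prod = pi fun i => (L i).prod := by
  have hmap : (Finset.univ.toList.flatMap fun i => (L i).map fun H => pi (Pi.mulSingle i H)) =
      (Finset.univ.toList.flatMap fun i => (L i).map (Pi.mulSingle i)).map piMonoidHom := by
    simp only [List.map_flatMap, List.map_map]
    rfl
  have hfactor : (List.prod ∘ fun i => (L i).map (Pi.mulSingle i)) =
      fun i => Pi.mulSingle i (L i).prod :=
    funext fun i => (map_list_prod (MonoidHom.mulSingle (fun i => Ideal (A i)) i) (L i)).symm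
  rw [hmap, ← map_list_prod, List.flatMap_def, List.prod_flatten, List.map_map, hfactor,
    Finset.prod_map_toList, Finset.univ_prod_mulSingle]
  rfl

theorem hasISPFactorization_pi [Finite ι] {I : ∀ i, Ideal (A i)} (hI : pi I ≠ ⊤)
    (h : ∀ i, I i ≠ ⊤ → (I i).HasISPFactorization) : (pi I).HasISPFactorization := by
  classical
  cases nonempty_fintype ι
  have hfac : ∀ i, ∃ (J : Ideal (A i)) (L : List (Ideal (A i))), J.IsInvertibleIdeal ∧
      (I i ≠ ⊤ → L ≠ []) ∧ (∀ H ∈ L, H ≠ ⊤ ∧ H.IsRadical) ∧ I i = J * L.prod := by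
    intro i
    by_cases hi : I i = ⊤
    · exact ⟨⊤, [], isInvertibleIdeal_top, absurd hi, by simp, by simp [hi]⟩
    · obtain ⟨J, L, hJ, hL, hH, heq⟩ := h i hi
      exact ⟨J, L, hJ, fun _ => hL, hH, heq⟩
  choose J L hJ hL hH heq using hfac
  obtain ⟨j, hj⟩ : ∃ j, I j ≠ ⊤ := not_forall.1 (mt pi_eq_top_iff.2 hI)
  obtain ⟨H, hHj⟩ := List.exists_mem_of_ne_nil _ (hL j hj)
  refine ⟨pi J, Finset.univ.toList.flatMap fun i => (L i).map fun H => pi (Pi.mulSingle i H),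
    isInvertibleIdeal_pi_iff.2 hJ, List.ne_nil_of_mem (List.mem_flatMap.2
      ⟨j, Finset.mem_toList.2 (Finset.mem_univ j), List.mem_map_of_mem hHj⟩), ?_, ?_⟩
  · simp only [List.mem_flatMap, List.mem_map]
    rintro _ ⟨i, -, H, hH', rfl⟩
    exact ⟨mt pi_mulSingle_eq_top_iff.1 (hH i H hH').1, isRadical_pi_mulSingle_iff.2 (hH i H hH').2⟩
  · rw [prod_flatMap_map_pi_mulSingle, ← pi_mul]
    exact congrArg pi (funext heq)

theorem HasISPFactorization.of_pi_mulSingle [Finite ι] [DecidableEq ι] {i : ι} {I : Ideal (A i)}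
    (hI : (pi (Pi.mulSingle i I)).HasISPFactorization) : I.HasISPFactorization := by
  obtain ⟨J, L, hJ, hL, hH, heq⟩ := hI
  have hproj : I = (pi (Pi.mulSingle i I)).map (Pi.evalRingHom A i) := by
    rw [map_evalRingHom_pi, Pi.mulSingle_eq_same]
  refine ⟨J.map (Pi.evalRingHom A i), L.map (map (Pi.evalRingHom A i)),
    hJ.map_evalRingHom i, by simpa using hL, ?_, ?_⟩
  · simp only [List.mem_map]
    rintro _ ⟨H, hH', rfl⟩
    refine ⟨fun htop => (hH H hH').1 ?_, (hH H hH').2.map_evalRingHom i⟩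
    -- away from `i`, the components of `H` contain those of `pi (Pi.mulSingle i I)`, which are `⊤`
    have hle : pi (Pi.mulSingle i I) ≤ H :=
      heq ▸ Ideal.mul_le_right.trans (le_of_dvd (List.dvd_prod hH'))
    rw [← pi_map_evalRingHom H, pi_eq_top_iff]
    intro j
    rcases eq_or_ne j i with rfl | hj
    · exact htop
    · simpa [hj, map_evalRingHom_pi] using map_mono (f := Pi.evalRingHom A j) hle
  · rw [hproj, heq, Ideal.map_mul]
    exact congrArg _ (map_list_prod (mapHom (Pi.evalRingHom A i)) L)

end Ideal

namespace IsISPRing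

variable {ι : Type*} [Finite ι] {A : ι → Type*} [∀ i, CommRing (A i)]

theorem pi (h : ∀ i, IsISPRing (A i)) : IsISPRing (∀ i, A i) := by
  intro I hI hreg
  rw [← Ideal.pi_map_evalRingHom I] at hI hreg ⊢
  exact Ideal.hasISPFactorization_pi hI fun i hi => h i _ hi (Ideal.isRegularIdeal_pi_iff.1 hreg i)

theorem of_pi (h : IsISPRing (∀ i, A i)) (i : ι) : IsISPRing (A i) := by
  classical
  intro I hI hreg
  exact (h _ (mt Ideal.pi_mulSingle_eq_top_iff.1 hI)
    (Ideal.isRegularIdeal_pi_mulSingle_iff.2 hreg)).of_pi_mulSingle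

end IsISPRing

/-- A finite direct product of commutative rings is an ISP-ring if and only if each
factor is an ISP-ring. -/
theorem finite_product_isISPRing_iff {n : ℕ} (A : Fin n → Type*)
    [∀ i, CommRing (A i)] :
    IsISPRing (∀ i, A i) ↔ ∀ i, IsISPRing (A i) :=
  ⟨fun h i => h.of_pi i, IsISPRing.pi⟩
end

section
/- Let f : A → B be a surjective homomorphism of commutative rings such that Ker(f) is a prime ideal of A and such that for every regular ideal I of B the preimage f⁻¹(I) is a regular ideal of A. If A is an ISP-ring, then B is an ISP-ring. -/
private lemma listProd_le_of_mem {A : Type*} [CommRing A] {H : Ideal A} :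
    ∀ {L : List (Ideal A)}, H ∈ L → L.prod ≤ H := by
  intro L
  induction L with
  | nil => intro h; simp at h
  | cons a t ih =>
    intro h
    rw [List.prod_cons]
    cases h with
    | head => exact Ideal.mul_le_left
    | tail _ h => exact Ideal.mul_le_right.trans (ih h)

private lemma map_isRadical {A B : Type*} [CommRing A] [CommRing B]
    (f : A →+* B) (hsurj : Function.Surjective f) {H : Ideal A}
    (hk : RingHom.ker f ≤ H) (hr : H.IsRadical) : (H.map f).IsRadical := by
  intro b hb
  obtain ⟨a, rfl⟩ := hsurj b
  obtain ⟨n, hn⟩ := hb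
  have hcm : (H.map f).comap f = H := by
    rw [Ideal.comap_map_of_surjective f hsurj, sup_eq_left.mpr ((RingHom.ker_eq_comap_bot f) ▸ hk)]
  have : a ^ n ∈ (H.map f).comap f := by
    simpa [Ideal.mem_comap, map_pow] using hn
  rw [hcm] at this
  exact Ideal.mem_map_of_mem f (hr ⟨n, this⟩)

private lemma map_locally_principal {A B : Type*} [CommRing A] [CommRing B]
    (f : A →+* B) (hsurj : Function.Surjective f) {J : Ideal A}
    (h : ∀ M : Ideal A, ∀ hM : M.IsMaximal,
      haveI := hM.isPrime
      (J.map (algebraMap A (Localization.AtPrime M))).IsPrincipal)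
    (M : Ideal B) (hM : M.IsMaximal) :
    haveI := hM.isPrime
    ((J.map f).map (algebraMap B (Localization.AtPrime M))).IsPrincipal := by
  haveI := hM.isPrime
  have hM' : (M.comap f).IsMaximal := Ideal.comap_isMaximal_of_surjective f hsurj
  haveI := hM'.isPrime
  obtain ⟨x, hx⟩ := h (M.comap f) hM'
  set g := Localization.localRingHom (M.comap f) M f rfl with hg
  have hcomm : (algebraMap B (Localization.AtPrime M)).comp f =
      g.comp (algebraMap A (Localization.AtPrime (M.comap f))) := by
    ext a
    simp [hg, Localization.localRingHom_to_map]
  rw [Ideal.map_map, hcomm, ← Ideal.map_map, hx]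
  rw [Ideal.submodule_span_eq, Ideal.map_span]
  exact ⟨⟨g x, by simp [Ideal.submodule_span_eq]⟩⟩

/-- If `f : A → B` is a surjective ring homomorphism with prime kernel such that regular
ideals of `B` lift to regular ideals of `A`, and `A` is an ISP-ring, then so is `B`. -/
theorem isISPRing_of_surjective {A B : Type*} [CommRing A] [CommRing B]
    (f : A →+* B) (hsurj : Function.Surjective f)
    (hker : (RingHom.ker f).IsPrime)
    (hlift : ∀ I : Ideal B, I.IsRegularIdeal → (I.comap f).IsRegularIdeal)
    (hA : IsISPRing A) : IsISPRing B := by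
  intro I hItop hIreg
  have hcomap_ne : I.comap f ≠ ⊤ := by
    intro h
    apply hItop
    rw [← Ideal.map_comap_of_surjective f hsurj I, h, Ideal.map_top]
  obtain ⟨J, L, ⟨hJreg, hJfg, hJloc⟩, hLne, hLmem, hfac⟩ :=
    hA (I.comap f) hcomap_ne (hlift I hIreg)
  have hker_le : ∀ H ∈ L, RingHom.ker f ≤ H := by
    intro H hH
    refine le_trans ?_ (listProd_le_of_mem hH)
    calc RingHom.ker f ≤ I.comap f := by
          intro a ha
          simp [Ideal.mem_comap, RingHom.mem_ker.mp ha]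
      _ = J * L.prod := hfac
      _ ≤ L.prod := Ideal.mul_le_right
  have hIeq : I = (J.map f) * (L.map (Ideal.map f)).prod := by
    have : Ideal.map f L.prod = (L.map (Ideal.map f)).prod := by
      clear hLne hLmem hker_le hfac
      induction L with
      | nil => simp [Ideal.map_top]
      | cons a t ih => simp [Ideal.map_mul, ih]
    rw [← Ideal.map_comap_of_surjective f hsurj I, hfac, Ideal.map_mul, this]
  refine ⟨J.map f, L.map (Ideal.map f), ⟨?_, Ideal.FG.map hJfg f, map_locally_principal f hsurj hJloc⟩,
    by simpa using hLne, ?_, hIeq⟩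
  · -- J.map f is regular: it contains I which is regular
    obtain ⟨b, hbI, hbreg⟩ := hIreg
    have : I ≤ J.map f := by
      rw [hIeq]; exact Ideal.mul_le_left
    exact ⟨b, this hbI, hbreg⟩
  · rintro H' hH'
    obtain ⟨H, hH, rfl⟩ := List.mem_map.mp hH'
    obtain ⟨hHtop, hHrad⟩ := hLmem H hH
    constructor
    · intro htop
      apply hHtop
      have : (H.map f).comap f = H := by
        rw [Ideal.comap_map_of_surjective f hsurj, sup_eq_left.mpr ((RingHom.ker_eq_comap_bot f) ▸ hker_le H hH)]
      rw [← this, htop, Ideal.comap_top]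
    · exact map_isRadical f hsurj (hker_le H hH) hHrad
end

section
/- Let A be an ISP-ring and let S be a multiplicatively closed subset of A consisting only of regular elements. Then the localization A_S is an ISP-ring. In particular, for every prime ideal P of A, the regular localization A_(P) is an ISP-ring. -/
/-!
Every ideal `I'` of `A_S` is extended from its contraction `I`, and `I` is regular when `I'` is,
because `S` consists of regular elements. Extending an ISP factorization `I = J H₁ ⋯ Hₙ` gives one
of `I'`: invertibility and radicality survive localization, and the factors `Hᵢ` that become the
unit ideal can be dropped. They cannot all become the unit ideal: then `I'` would be the extension
of `J`, so `I = J = J H₁ ⋯ Hₙ`, and since `J` is finitely generated and regular, Nakayama's lemma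
would force `H₁ ⋯ Hₙ = A`.
-/

namespace Ideal

variable {A : Type*} [CommRing A]

theorem IsRegularIdeal.eq_top_of_le_mul {I K : Ideal A} (hI : I.IsRegularIdeal) (hfg : I.FG)
    (h : I ≤ K * I) : K = ⊤ := by
  obtain ⟨r, hr1, hr0⟩ :=
    Submodule.exists_sub_one_mem_and_smul_eq_zero_of_fg_of_le_smul K I hfg h
  obtain ⟨a, haI, ha⟩ := hI
  have hr : r = 0 := mem_nonZeroDivisors_iff_right.1 ha r (hr0 a haI)
  rw [hr, zero_sub, neg_mem_iff] at hr1
  exact (eq_top_iff_one K).2 hr1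

theorem list_prod_ne_top {L : List (Ideal A)} (hne : L ≠ []) (hL : ∀ H ∈ L, H ≠ ⊤) :
    L.prod ≠ ⊤ := by
  obtain ⟨H, tl, rfl⟩ := List.exists_cons_of_ne_nil hne
  intro htop
  apply hL H List.mem_cons_self
  rw [List.prod_cons] at htop
  exact top_le_iff.1 (htop ▸ mul_le_left)

theorem hasISPFactorization_of_eq_mul_prod {I J : Ideal A} {L : List (Ideal A)}
    (hJ : J.IsInvertibleIdeal) (hL : ∀ H ∈ L, H.IsRadical) (hprod : L.prod ≠ ⊤)
    (hI : I = J * L.prod) : I.HasISPFactorization := by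
  classical
  refine ⟨J, L.filter (· != 1), hJ, ?_, ?_, by rw [List.prod_filter_bne_one, hI]⟩
  · intro hnil
    rw [← List.prod_filter_bne_one, hnil, List.prod_nil, one_eq_top] at hprod
    exact hprod rfl
  · intro H hH
    simp only [List.mem_filter, bne_iff_ne, ne_eq, one_eq_top] at hH
    exact ⟨hH.2, hL H hH.1⟩

theorem isPrincipal_map_atPrime_of_forall_isMaximal {B : Type*} [CommRing B] (f : A →+* B)
    {J : Ideal A} (hJ : ∀ (M : Ideal A) [M.IsMaximal],
      (J.map (algebraMap A (Localization.AtPrime M))).IsPrincipal)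
    (P : Ideal B) [P.IsPrime] :
    ((J.map f).map (algebraMap B (Localization.AtPrime P))).IsPrincipal := by
  obtain ⟨M, hM, hPM⟩ := (P.comap f).exists_le_maximal (comap_ne_top f IsPrime.ne_top')
  obtain ⟨x, hx⟩ := (hJ M).principal
  have hunit (s : M.primeCompl) : IsUnit (((algebraMap B (Localization.AtPrime P)).comp f) s) :=
    (IsLocalization.AtPrime.isUnit_to_map_iff _ P _).2 fun hs => s.2 (hPM hs)
  rw [map_map, ← IsLocalization.lift_comp (S := Localization.AtPrime M) hunit, ← map_map, hx]
  exact Submodule.IsPrincipal.map_ringHom _ ⟨⟨x, rfl⟩⟩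

end Ideal

section Localization

variable {A B : Type*} [CommRing A] [CommRing B] [Algebra A B] (S : Submonoid A)
  [IsLocalization S B]
include S

theorem Ideal.IsRadical.map_isLocalization {H : Ideal A} (hH : H.IsRadical) :
    (H.map (algebraMap A B)).IsRadical := by
  rw [Ideal.IsRadical, ← IsLocalization.map_radical S, hH.radical]

theorem Ideal.IsInvertibleIdeal.map_isLocalization {J : Ideal A} (hJ : J.IsInvertibleIdeal) :
    (J.map (algebraMap A B)).IsInvertibleIdeal := by
  obtain ⟨⟨a, haJ, ha⟩, hfg, hloc⟩ := hJ
  refine ⟨⟨algebraMap A B a, Ideal.mem_map_of_mem _ haJ,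
    IsLocalization.map_nonZeroDivisors_le S B (Submonoid.mem_map_of_mem _ ha)⟩,
    hfg.map _, fun P hP => ?_⟩
  have := hP.isPrime
  exact Ideal.isPrincipal_map_atPrime_of_forall_isMaximal _ hloc P

theorem Ideal.IsRegularIdeal.comap_isLocalization (hS : S ≤ nonZeroDivisors A) {I : Ideal B}
    (hI : I.IsRegularIdeal) : (I.comap (algebraMap A B)).IsRegularIdeal := by
  obtain ⟨z, hzI, hz⟩ := hI
  obtain ⟨⟨a, s⟩, hzs⟩ := IsLocalization.surj S z
  refine ⟨a, ?_, comap_nonZeroDivisors_le_of_injective (IsLocalization.injective B hS) ?_⟩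
  · rw [Ideal.mem_comap, ← hzs]
    exact I.mul_mem_right _ hzI
  · change algebraMap A B a ∈ nonZeroDivisors B
    rw [← hzs]
    exact mul_mem hz (IsLocalization.map_units B s).mem_nonZeroDivisors

theorem IsISPRing.of_isLocalization (hA : IsISPRing A) (hS : S ≤ nonZeroDivisors A) :
    IsISPRing B := by
  intro I' hI'top hI'reg
  set I := I'.comap (algebraMap A B)
  have hmap : I.map (algebraMap A B) = I' := IsLocalization.map_under S B I'
  have hItop : I ≠ ⊤ := fun h => hI'top (by rw [← hmap, h, Ideal.map_top])
  have hIreg : I.IsRegularIdeal := hI'reg.comap_isLocalization S hS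
  obtain ⟨J, L, hJ, hLne, hL, hIJL⟩ := hA I hItop hIreg
  have hI' : I' = J.map (algebraMap A B) * L.prod.map (algebraMap A B) := by
    rw [← hmap, hIJL, Ideal.map_mul]
  have hprod : L.prod.map (algebraMap A B) ≠ ⊤ := by
    intro htop
    have hJI : J ≤ I := Ideal.map_le_iff_le_comap.1 (by rw [hI', htop, Ideal.mul_top])
    have hIJ : I = J := le_antisymm (hIJL ▸ Ideal.mul_le_left) hJI
    refine Ideal.list_prod_ne_top hLne (fun H hH => (hL H hH).1)
      (hIreg.eq_top_of_le_mul (hIJ ▸ hJ.2.1) ?_)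
    calc I = J * L.prod := hIJL
      _ ≤ L.prod * I := by rw [mul_comm, hIJ]
  have hmapL : L.prod.map (algebraMap A B) = (L.map (Ideal.map (algebraMap A B))).prod :=
    map_list_prod (Ideal.mapHom _) L
  rw [hmapL] at hprod hI'
  exact Ideal.hasISPFactorization_of_eq_mul_prod (hJ.map_isLocalization S)
    (List.forall_mem_map.2 fun H hH => (hL H hH).2.map_isLocalization S) hprod hI'

end Localization

/-- If `A` is an ISP-ring and `S` is a multiplicative set consisting of regular elements,
then `A_S` is an ISP-ring; in particular each regular localization `A_(P)` at a prime `P`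
is an ISP-ring. -/
theorem isISPRing_localization {A : Type*} [CommRing A] (hA : IsISPRing A)
    (S : Submonoid A) (hS : ∀ s ∈ S, s ∈ nonZeroDivisors A) :
    IsISPRing (Localization S) ∧
      ∀ (P : Ideal A) (hP : P.IsPrime),
        IsISPRing (Localization (nonZeroDivisors A ⊓ @Ideal.primeCompl A _ P hP)) :=
  ⟨hA.of_isLocalization S hS,
    fun P _ => hA.of_isLocalization (nonZeroDivisors A ⊓ P.primeCompl) inf_le_left⟩
end

section
/- Let A be a commutative ring, E an A-module, and set S = A ∖ (Z(A) ∪ Z(E)), where Z(A) is the set of zero-divisors of A and Z(E) = {a ∈ A : ae = 0 for some nonzero e ∈ E}. Assume that E = sE for every s ∈ S. Then the trivial ring extension A∝E is an ISP-ring if and only if every proper ideal I of A with I ∩ S ≠ ∅ can be written as J·H₁⋯Hₙ where J is an invertible ideal of A, n ≥ 1, and each Hᵢ is a proper radical ideal of A. -/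
set_option linter.unusedSectionVars false
set_option maxHeartbeats 1000000

namespace ISPAux

open TrivSqZeroExt


section Generic

variable {R S : Type*} [CommRing R] [CommRing S] {f : R →+* S} (hf : Function.Surjective f)
include hf

lemma comap_map_eq {H : Ideal R} (hker : RingHom.ker f ≤ H) : (H.map f).comap f = H := by
  rw [Ideal.comap_map_of_surjective f hf, ← RingHom.ker_eq_comap_bot]
  exact sup_eq_left.mpr hker

lemma map_ne_top {H : Ideal R} (hker : RingHom.ker f ≤ H) (h : H ≠ ⊤) : H.map f ≠ ⊤ := by
  intro htop
  apply h
  rw [← comap_map_eq hf hker, htop, Ideal.comap_top]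

lemma map_isRadical {H : Ideal R} (hker : RingHom.ker f ≤ H) (h : H.IsRadical) :
    (H.map f).IsRadical := by
  intro y hy
  obtain ⟨n, hn⟩ := hy
  obtain ⟨x, rfl⟩ := hf y
  have hxn : x ^ n ∈ (H.map f).comap f := Ideal.mem_comap.mpr (by rw [map_pow]; exact hn)
  rw [comap_map_eq hf hker] at hxn
  exact Ideal.mem_map_of_mem f (h ⟨n, hxn⟩)

lemma map_isMaximal {M : Ideal R} (hker : RingHom.ker f ≤ M) (hM : M.IsMaximal) :
    (M.map f).IsMaximal := by
  rw [Ideal.isMaximal_def] at hM ⊢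
  constructor
  · exact map_ne_top hf hker hM.1
  · intro b hb
    by_cases hbt : b.comap f = ⊤
    · rw [← Ideal.map_comap_of_surjective f hf b, hbt, Ideal.map_top]
    · have h1 : M ≤ b.comap f := by
        rw [← comap_map_eq hf hker]
        exact Ideal.comap_mono hb.le
      have h2 : M ≠ b.comap f := by
        intro h
        apply hb.ne
        rw [h, Ideal.map_comap_of_surjective f hf b]
      exact absurd (hM.2 _ (lt_of_le_of_ne h1 h2)) hbt

lemma map_list_prod (L : List (Ideal R)) :
    (L.prod).map f = (L.map (Ideal.map f)).prod := by
  induction L with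
  | nil => simp [Ideal.map_top]
  | cons H T ih => simp [Ideal.map_mul, ih]


lemma isPrincipal_map_down {M : Ideal S} (hM : M.IsMaximal) {N : Ideal R} (hN : N.IsPrime)
    (hNM : N = M.comap f) {J : Ideal R}
    (hp : (J.map (algebraMap R (@Localization.AtPrime R _ N hN))).IsPrincipal) :
    ((J.map f).map (algebraMap S (@Localization.AtPrime S _ M hM.isPrime))).IsPrincipal := by
  haveI := hM.isPrime
  haveI := hN
  set B := Localization.AtPrime N
  set AM := Localization.AtPrime M
  have hunits : ∀ y : N.primeCompl, IsUnit ((algebraMap S AM).comp f y) := by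
    rintro ⟨y, hy⟩
    have : f y ∈ M.primeCompl := by
      intro h
      exact hy (by rw [hNM]; exact h)
    exact IsLocalization.map_units AM (⟨f y, this⟩ : M.primeCompl)
  set ψ : B →+* AM := IsLocalization.lift (M := N.primeCompl) (S := B) hunits with hψ
  have hcomp : ψ.comp (algebraMap R B) = (algebraMap S AM).comp f := by
    ext r
    exact (show ψ (algebraMap R B r) = algebraMap S AM (f r) from IsLocalization.lift_eq hunits r)
  have key : (J.map f).map (algebraMap S AM) = (J.map (algebraMap R B)).map ψ := by
    rw [Ideal.map_map, Ideal.map_map, hcomp]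
  obtain ⟨x, hx⟩ := hp
  refine ⟨⟨ψ x, ?_⟩⟩
  rw [key, hx]
  show Ideal.map ψ (Ideal.span {x}) = Ideal.span {ψ x}
  rw [Ideal.map_span, Set.image_singleton]


lemma isPrincipal_map_up {𝓜 : Ideal R} (h𝓜 : 𝓜.IsMaximal) (hker𝓜 : RingHom.ker f ≤ 𝓜)
    {J : Ideal R} {s' : R} (hs'J : s' ∈ J)
    (hK2 : RingHom.ker f * RingHom.ker f = ⊥)
    (hsK : RingHom.ker f ≤ Ideal.span {s'} * RingHom.ker f)
    (hp : ((J.map f).map (algebraMap S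
      (@Localization.AtPrime S _ (𝓜.map f) (map_isMaximal hf hker𝓜 h𝓜).isPrime))).IsPrincipal) :
    (J.map (algebraMap R (@Localization.AtPrime R _ 𝓜 h𝓜.isPrime))).IsPrincipal := by
  haveI := h𝓜.isPrime
  have hM := map_isMaximal hf hker𝓜 h𝓜
  haveI := hM.isPrime
  set B := Localization.AtPrime 𝓜 with hB
  set AM := Localization.AtPrime (𝓜.map f) with hAM
  have hcm : (𝓜.map f).comap f = 𝓜 := comap_map_eq hf hker𝓜
  have hunits : ∀ y : 𝓜.primeCompl, IsUnit ((algebraMap S AM).comp f y) := by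
    rintro ⟨y, hy⟩
    have hfy : f y ∈ (𝓜.map f).primeCompl := fun h => hy (by rw [← hcm]; exact h)
    exact IsLocalization.map_units AM (⟨f y, hfy⟩ : (𝓜.map f).primeCompl)
  set ψ : B →+* AM := IsLocalization.lift (M := 𝓜.primeCompl) hunits with hψdef
  have hψa : ∀ r : R, ψ (algebraMap R B r) = algebraMap S AM (f r) := fun r =>
    IsLocalization.lift_eq hunits r
  -- surjectivity of ψ
  have hψsurj : Function.Surjective ψ := by
    rw [hψdef, IsLocalization.lift_surjective_iff]
    intro v
    obtain ⟨⟨a, u⟩, hy⟩ := IsLocalization.surj (M := (𝓜.map f).primeCompl) v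
    obtain ⟨r, hr⟩ := hf a
    obtain ⟨w0, hw0⟩ := hf (u : S)
    have hw0mem : w0 ∈ 𝓜.primeCompl := fun h => u.2 (hw0 ▸ Ideal.mem_map_of_mem f h)
    exact ⟨(r, ⟨w0, hw0mem⟩), by simpa [hr, hw0] using hy⟩
  -- kernel of ψ is contained in N
  set N : Ideal B := (RingHom.ker f).map (algebraMap R B) with hN
  have hkerψ : ∀ z : B, ψ z = 0 → z ∈ N := by
    intro z hz
    obtain ⟨⟨r, u⟩, hru⟩ := IsLocalization.surj (M := 𝓜.primeCompl) z
    have h0 : algebraMap S AM (f r) = 0 := by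
      rw [← hψa, ← hru, map_mul, hz, zero_mul]
    obtain ⟨⟨v, hv⟩, hvr⟩ := (IsLocalization.map_eq_zero_iff (𝓜.map f).primeCompl AM _).mp h0
    obtain ⟨v0, hv0⟩ := hf v
    have hv0mem : v0 ∈ 𝓜.primeCompl := by
      intro h
      apply hv
      rw [← hv0]
      exact Ideal.mem_map_of_mem f h
    have hmem : v0 * r ∈ RingHom.ker f := by
      rw [RingHom.mem_ker, map_mul, hv0]
      exact hvr
    have h2 : algebraMap R B (v0 * r) ∈ N := Ideal.mem_map_of_mem _ hmem
    have hvunit : IsUnit (algebraMap R B v0) := IsLocalization.map_units B ⟨v0, hv0mem⟩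
    obtain ⟨w, hw⟩ := hvunit
    have h3 : algebraMap R B r ∈ N := by
      have heq : algebraMap R B r = ↑w⁻¹ * algebraMap R B (v0 * r) := by
        rw [map_mul, ← hw, ← mul_assoc, Units.inv_mul, one_mul]
      rw [heq]
      exact Ideal.mul_mem_left _ _ h2
    have huunit : IsUnit (algebraMap R B (u : R)) := IsLocalization.map_units B u
    obtain ⟨w2, hw2⟩ := huunit
    have heq : z = ↑w2⁻¹ * algebraMap R B r := by
      rw [← hru, ← hw2, mul_comm z, ← mul_assoc, Units.inv_mul, one_mul]
    rw [heq]
    exact Ideal.mul_mem_left _ _ h3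
  -- N * N = 0
  have hNN : N * N = ⊥ := by
    rw [hN, ← Ideal.map_mul, hK2, Ideal.map_bot]
  -- N ≤ span (σs) * N
  set σs : B := algebraMap R B s' with hσs
  have hNs : N ≤ Ideal.span {σs} * N := by
    rw [hN, Ideal.map_le_iff_le_comap]
    intro k hk
    have hk2 : k ∈ Ideal.span {s'} * RingHom.ker f := hsK hk
    rw [Ideal.mem_span_singleton_mul] at hk2
    obtain ⟨k', hk', hkk'⟩ := hk2
    rw [Ideal.mem_comap, ← hkk', map_mul]
    exact Ideal.mul_mem_mul (Ideal.subset_span rfl) (Ideal.mem_map_of_mem _ hk')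
  -- main argument
  set JB : Ideal B := J.map (algebraMap R B) with hJB
  have hcomp : ψ.comp (algebraMap R B) = (algebraMap S AM).comp f := by
    ext r
    exact hψa r
  have hψJB : JB.map ψ = (J.map f).map (algebraMap S AM) := by
    rw [hJB, Ideal.map_map, Ideal.map_map, hcomp]
  obtain ⟨x, hx⟩ := hp
  have hxmem : x ∈ JB.map ψ := by
    rw [hψJB, hx]
    exact Submodule.mem_span_singleton_self x
  obtain ⟨xt, hxtJ, hxt⟩ := Ideal.mem_map_iff_of_surjective ψ hψsurj |>.mp hxmem
  have hle : JB ≤ Ideal.span {xt} ⊔ N := by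
    intro z hz
    have hz1 : ψ z ∈ Ideal.span {x} := by
      have : ψ z ∈ JB.map ψ := Ideal.mem_map_of_mem ψ hz
      rwa [hψJB, hx] at this
    obtain ⟨c, hc⟩ := Ideal.mem_span_singleton'.mp hz1
    obtain ⟨c', hc'⟩ := hψsurj c
    have hzc : ψ (z - c' * xt) = 0 := by
      rw [map_sub, map_mul, hc', hxt, hc, sub_self]
    have h4 : z - c' * xt ∈ N := hkerψ _ hzc
    have heq : z = c' * xt + (z - c' * xt) := by ring
    rw [heq]
    exact Ideal.add_mem _
      (Ideal.mem_sup_left (Ideal.mul_mem_left _ _ (Submodule.mem_span_singleton_self xt)))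
      (Ideal.mem_sup_right h4)
  have hσsJB : σs ∈ JB := Ideal.mem_map_of_mem _ hs'J
  obtain ⟨p, hp', n, hn, hpn⟩ := Submodule.mem_sup.mp (hle hσsJB)
  have hNx : N ≤ Ideal.span {xt} := by
    intro m hm
    obtain ⟨m', hm', hmm'⟩ := Ideal.mem_span_singleton_mul.mp (hNs hm)
    have h0 : n * m' = 0 := by
      have := Ideal.mul_mem_mul hn hm'
      rw [hNN] at this
      simpa using this
    have heq : m = p * m' + n * m' := by
      rw [← add_mul, hpn, hmm']
    rw [heq, h0, add_zero]
    exact Ideal.mul_mem_right _ _ hp'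
  refine ⟨⟨xt, le_antisymm (le_trans hle (sup_le le_rfl hNx)) ?_⟩⟩
  rw [show Submodule.span B {xt} = Ideal.span {xt} from rfl, Ideal.span_le,
    Set.singleton_subset_iff]
  exact hxtJ

end Generic


variable {A E : Type*} [CommRing A] [AddCommGroup E] [Module A E] [Module Aᵐᵒᵖ E]
  [IsCentralScalar A E]

/-- The projection `A ∝ E → A` as a ring hom. -/
def pr (A E : Type*) [CommRing A] [AddCommGroup E] [Module A E] [Module Aᵐᵒᵖ E]
    [IsCentralScalar A E] : TrivSqZeroExt A E →+* A := (fstHom A A E).toRingHom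

@[simp] lemma pr_apply (x : TrivSqZeroExt A E) : pr A E x = x.fst := rfl

lemma pr_surjective : Function.Surjective (pr A E) := fun a => ⟨inl a, rfl⟩

lemma mem_ker_pr {x : TrivSqZeroExt A E} : x ∈ RingHom.ker (pr A E) ↔ x.fst = 0 := by
  rw [RingHom.mem_ker]; rfl

lemma mul_self_eq_zero_of_fst_eq_zero {x y : TrivSqZeroExt A E} (hx : x.fst = 0)
    (hy : y.fst = 0) : x * y = 0 := by
  ext <;> simp [hx, hy]

lemma inl_regular {s : A} (hs : s ∈ nonZeroDivisors A) (hsE : ∀ e : E, s • e = 0 → e = 0) :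
    (inl s : TrivSqZeroExt A E) ∈ nonZeroDivisors (TrivSqZeroExt A E) := by
  refine mem_nonZeroDivisors_iff_right.mpr fun z hz => ?_
  have h1 : z.fst * s = 0 := by simpa using congrArg fst hz
  have h2 : s • z.snd = 0 := by
    have := congrArg snd hz
    simpa [snd_mul, op_smul_eq_smul] using this
  have hz1 : z.fst = 0 := mem_nonZeroDivisors_iff_right.mp hs z.fst h1
  have hz2 : z.snd = 0 := hsE _ h2
  ext <;> simp [hz1, hz2]

lemma regular_fst {x : TrivSqZeroExt A E} (hx : x ∈ nonZeroDivisors (TrivSqZeroExt A E)) :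
    x.fst ∈ nonZeroDivisors A ∧ ∀ e : E, x.fst • e = 0 → e = 0 := by
  have hE' : ∀ e : E, x.fst • e = 0 → e = 0 := by
    intro e he
    have h : (inr e : TrivSqZeroExt A E) * x = 0 := by
      ext
      · simp
      · simpa [snd_mul, op_smul_eq_smul] using he
    have := mem_nonZeroDivisors_iff_right.mp hx _ h
    simpa using congrArg snd this
  refine ⟨mem_nonZeroDivisors_iff_right.mpr fun b hb => ?_, hE'⟩
  have hbe : b • x.snd = 0 := by
    apply hE'
    rw [smul_smul, mul_comm, hb, zero_smul]
  have h : (inl b : TrivSqZeroExt A E) * x = 0 := by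
    ext
    · simpa using hb
    · simpa [snd_mul, op_smul_eq_smul] using hbe
  have := mem_nonZeroDivisors_iff_right.mp hx _ h
  simpa using congrArg fst this


lemma ker_le_of_isPrime {P : Ideal (TrivSqZeroExt A E)} (hP : P.IsPrime) :
    RingHom.ker (pr A E) ≤ P := by
  intro z hz
  have h0 : z * z = 0 := mul_self_eq_zero_of_fst_eq_zero (mem_ker_pr.mp hz) (mem_ker_pr.mp hz)
  have : z * z ∈ P := by rw [h0]; exact P.zero_mem
  exact (hP.mem_or_mem this).elim id id

lemma ker_sq : RingHom.ker (pr A E) * RingHom.ker (pr A E) = ⊥ := by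
  rw [eq_bot_iff]
  refine Ideal.mul_le.mpr fun x hx y hy => ?_
  rw [Ideal.mem_bot]
  exact mul_self_eq_zero_of_fst_eq_zero (mem_ker_pr.mp hx) (mem_ker_pr.mp hy)

lemma invertible_down {J' : Ideal (TrivSqZeroExt A E)} (hJ' : J'.IsInvertibleIdeal) :
    (J'.map (pr A E)).IsInvertibleIdeal ∧
      ∃ t ∈ J'.map (pr A E), t ∈ nonZeroDivisors A ∧ ∀ e : E, t • e = 0 → e = 0 := by
  obtain ⟨⟨x, hxJ, hxreg⟩, hfg, hloc⟩ := hJ'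
  obtain ⟨ht, htE⟩ := regular_fst hxreg
  have htmem : x.fst ∈ J'.map (pr A E) := Ideal.mem_map_of_mem _ hxJ
  refine ⟨⟨⟨x.fst, htmem, ht⟩, Ideal.FG.map hfg _, ?_⟩, ⟨x.fst, htmem, ht, htE⟩⟩
  intro M hM
  have h𝓜 : (M.comap (pr A E)).IsMaximal := Ideal.comap_isMaximal_of_surjective _ pr_surjective
  have hp := hloc _ h𝓜
  exact isPrincipal_map_down pr_surjective hM h𝓜.isPrime rfl hp

section hE

variable (hE : ∀ s : A, s ∈ nonZeroDivisors A → (∀ e : E, s • e = 0 → e = 0) →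
      ∀ e : E, ∃ e' : E, e = s • e')
include hE

lemma inl_fst_mem_of_mem {I : Ideal (TrivSqZeroExt A E)} {x : TrivSqZeroExt A E} (hx : x ∈ I)
    (hs : x.fst ∈ nonZeroDivisors A) (hsE : ∀ e : E, x.fst • e = 0 → e = 0) :
    (inl x.fst : TrivSqZeroExt A E) ∈ I := by
  obtain ⟨e', he'⟩ := hE x.fst hs hsE x.snd
  have h : (inl x.fst : TrivSqZeroExt A E) = x * (1 - inr e') := by
    ext
    · simp
    · simp [snd_mul, op_smul_eq_smul, he']
  rw [h]
  exact Ideal.mul_mem_right _ _ hx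

lemma ker_le_of_inl_mem {I : Ideal (TrivSqZeroExt A E)} {s : A}
    (hsI : (inl s : TrivSqZeroExt A E) ∈ I) (hs : s ∈ nonZeroDivisors A)
    (hsE : ∀ e : E, s • e = 0 → e = 0) : RingHom.ker (pr A E) ≤ I := by
  intro z hz
  obtain ⟨e', he'⟩ := hE s hs hsE z.snd
  have h : z = inl s * inr e' := by
    ext
    · simpa using mem_ker_pr.mp hz
    · simpa using he'
  rw [h]
  exact Ideal.mul_mem_right _ _ hsI

lemma comap_mul {I₁ I₂ : Ideal A} {s₁ s₂ : A} (h₁ : s₁ ∈ I₁) (h₂ : s₂ ∈ I₂)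
    (hs₁ : s₁ ∈ nonZeroDivisors A) (hs₁E : ∀ e : E, s₁ • e = 0 → e = 0)
    (hs₂ : s₂ ∈ nonZeroDivisors A) (hs₂E : ∀ e : E, s₂ • e = 0 → e = 0) :
    (I₁ * I₂).comap (pr A E) = I₁.comap (pr A E) * I₂.comap (pr A E) := by
  refine le_antisymm ?_ (Ideal.mul_le.mpr fun r hr t ht => Ideal.mem_comap.mpr (by
    show (r * t).fst ∈ I₁ * I₂
    rw [fst_mul]
    exact Ideal.mul_mem_mul (Ideal.mem_comap.mp hr) (Ideal.mem_comap.mp ht)))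
  intro z hz
  have hz' : z.fst ∈ I₁ * I₂ := hz
  have hmaple : ∀ I : Ideal A, I.map (inlHom A E) ≤ I.comap (pr A E) :=
    fun I => Ideal.map_le_iff_le_comap.mpr fun a ha => by simpa using ha
  have h1 : (inl z.fst : TrivSqZeroExt A E) ∈ I₁.comap (pr A E) * I₂.comap (pr A E) := by
    have hle : Ideal.map (inlHom A E) (I₁ * I₂) ≤ I₁.comap (pr A E) * I₂.comap (pr A E) := by
      rw [Ideal.map_mul]
      exact Ideal.mul_mono (hmaple I₁) (hmaple I₂)
    exact hle (Ideal.mem_map_of_mem _ hz')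
  have h2 : (inr z.snd : TrivSqZeroExt A E) ∈ I₁.comap (pr A E) * I₂.comap (pr A E) := by
    obtain ⟨e', he'⟩ := hE s₁ hs₁ hs₁E z.snd
    obtain ⟨e'', he''⟩ := hE s₂ hs₂ hs₂E e'
    have h : (inr z.snd : TrivSqZeroExt A E) = inl s₁ * (inl s₂ * inr e'') := by
      ext
      · simp
      · simp [snd_mul, op_smul_eq_smul, he', he'']
    rw [h]
    exact Ideal.mul_mem_mul (Ideal.mem_comap.mpr (by simpa using h₁))
      (Ideal.mul_mem_right _ _ (Ideal.mem_comap.mpr (by simpa using h₂)))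
  have hz2 : z = inl z.fst + inr z.snd := (inl_fst_add_inr_snd_eq z).symm
  rw [hz2]
  exact Ideal.add_mem _ h1 h2

lemma ker_le_span_inl_mul {s : A} (hs : s ∈ nonZeroDivisors A)
    (hsE : ∀ e : E, s • e = 0 → e = 0) :
    RingHom.ker (pr A E) ≤ Ideal.span {(inl s : TrivSqZeroExt A E)} * RingHom.ker (pr A E) := by
  intro z hz
  obtain ⟨e', he'⟩ := hE s hs hsE z.snd
  rw [Ideal.mem_span_singleton_mul]
  refine ⟨inr e', mem_ker_pr.mpr (by simp), ?_⟩
  ext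
  · simpa using (mem_ker_pr.mp hz).symm
  · simpa using he'.symm

lemma comap_eq_map_inl {J : Ideal A} {s : A} (hsJ : s ∈ J) (hs : s ∈ nonZeroDivisors A)
    (hsE : ∀ e : E, s • e = 0 → e = 0) :
    J.comap (pr A E) = J.map (inlHom A E) := by
  refine le_antisymm ?_
    (Ideal.map_le_iff_le_comap.mpr fun a ha => Ideal.mem_comap.mpr (by simpa using ha))
  intro z hz
  have h1 : (inl z.fst : TrivSqZeroExt A E) ∈ J.map (inlHom A E) :=
    Ideal.mem_map_of_mem _ (Ideal.mem_comap.mp hz)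
  have h2 : (inr z.snd : TrivSqZeroExt A E) ∈ J.map (inlHom A E) := by
    obtain ⟨e', he'⟩ := hE s hs hsE z.snd
    have heq : (inr z.snd : TrivSqZeroExt A E) = inlHom A E s * inr e' := by
      show (inr z.snd : TrivSqZeroExt A E) = inl s * inr e'
      rw [inl_mul_inr, ← he']
    rw [heq]
    exact Ideal.mul_mem_right _ _ (Ideal.mem_map_of_mem _ hsJ)
  have hz2 : z = inl z.fst + inr z.snd := (inl_fst_add_inr_snd_eq z).symm
  rw [hz2]
  exact Ideal.add_mem _ h1 h2

lemma invertible_up {J : Ideal A} {s : A} (hsJ : s ∈ J) (hs : s ∈ nonZeroDivisors A)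
    (hsE : ∀ e : E, s • e = 0 → e = 0) (hJ : J.IsInvertibleIdeal) :
    (J.comap (pr A E)).IsInvertibleIdeal := by
  obtain ⟨hreg, hfg, hloc⟩ := hJ
  refine ⟨⟨inl s, Ideal.mem_comap.mpr (by simpa using hsJ), inl_regular hs hsE⟩, ?_, ?_⟩
  · rw [comap_eq_map_inl hE hsJ hs hsE]
    exact Ideal.FG.map hfg _
  · intro 𝓜 h𝓜
    have hker𝓜 : RingHom.ker (pr A E) ≤ 𝓜 := ker_le_of_isPrime h𝓜.isPrime
    have hM := map_isMaximal pr_surjective hker𝓜 h𝓜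
    have hp := hloc (𝓜.map (pr A E)) hM
    have hmap : (J.comap (pr A E)).map (pr A E) = J :=
      Ideal.map_comap_of_surjective _ pr_surjective J
    refine isPrincipal_map_up pr_surjective h𝓜 hker𝓜
      (Ideal.mem_comap.mpr (by simpa using hsJ)) ker_sq (ker_le_span_inl_mul hE hs hsE) ?_
    rw [hmap]
    exact hp

lemma comap_list_prod {t : A} (ht : t ∈ nonZeroDivisors A)
    (htE : ∀ e : E, t • e = 0 → e = 0) :
    ∀ L : List (Ideal A), t ∈ L.prod →
      (L.prod).comap (pr A E) = (L.map (Ideal.comap (pr A E))).prod := by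
  intro L
  induction L with
  | nil => intro _; simp [Ideal.comap_top]
  | cons H T ih =>
    intro htL
    rw [List.prod_cons] at htL
    have h1 : t ∈ H := Ideal.mul_le_left htL
    have h2 : t ∈ T.prod := Ideal.mul_le_right htL
    rw [List.prod_cons, comap_mul hE h1 h2 ht htE ht htE, List.map_cons, List.prod_cons, ih h2]

end hE

end ISPAux

/-- Let `E` be an `A`-module with `E = sE` for every `s ∈ S = A ∖ (Z(A) ∪ Z(E))`. Then the
trivial ring extension `A ∝ E` is an ISP-ring iff every proper ideal of `A` meeting `S`
factors as an invertible ideal times a nonempty product of proper radical ideals. -/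
theorem trivSqZeroExt_isISPRing_iff {A E : Type*} [CommRing A]
    [AddCommGroup E] [Module A E] [Module Aᵐᵒᵖ E] [IsCentralScalar A E]
    (hE : ∀ s : A, s ∈ nonZeroDivisors A → (∀ e : E, s • e = 0 → e = 0) →
      ∀ e : E, ∃ e' : E, e = s • e') :
    IsISPRing (TrivSqZeroExt A E) ↔
      ∀ I : Ideal A, I ≠ ⊤ →
        (∃ s ∈ I, s ∈ nonZeroDivisors A ∧ (∀ e : E, s • e = 0 → e = 0)) →
        I.HasISPFactorization := by
  classical
  open ISPAux TrivSqZeroExt in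
  constructor
  · rintro hISP I hI ⟨s, hsI, hs, hsE⟩
    have h𝓘top : I.comap (pr A E) ≠ ⊤ := fun h => hI (by
      rw [← Ideal.map_comap_of_surjective (pr A E) pr_surjective I, h, Ideal.map_top])
    have h𝓘reg : (I.comap (pr A E)).IsRegularIdeal :=
      ⟨inl s, Ideal.mem_comap.mpr (by simpa using hsI), inl_regular hs hsE⟩
    obtain ⟨𝓙, 𝓛, h𝓙, h𝓛ne, h𝓛, heq⟩ := hISP _ h𝓘top h𝓘reg
    refine ⟨𝓙.map (pr A E), 𝓛.map (Ideal.map (pr A E)), (invertible_down h𝓙).1,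
      by simpa using h𝓛ne, ?_, ?_⟩
    · rintro H hH
      obtain ⟨𝓗, h𝓗mem, rfl⟩ := List.mem_map.mp hH
      obtain ⟨h𝓗top, h𝓗rad⟩ := h𝓛 _ h𝓗mem
      have hker : RingHom.ker (pr A E) ≤ 𝓗 := fun z hz => h𝓗rad ⟨2, by
        rw [pow_two, mul_self_eq_zero_of_fst_eq_zero (mem_ker_pr.mp hz) (mem_ker_pr.mp hz)]
        exact 𝓗.zero_mem⟩
      exact ⟨map_ne_top pr_surjective hker h𝓗top, map_isRadical pr_surjective hker h𝓗rad⟩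
    · have h0 : I = (I.comap (pr A E)).map (pr A E) :=
        (Ideal.map_comap_of_surjective (pr A E) pr_surjective I).symm
      rw [h0, heq, Ideal.map_mul, ISPAux.map_list_prod pr_surjective]
  · intro hA 𝓘 h𝓘top h𝓘reg
    obtain ⟨x, hxI, hxreg⟩ := h𝓘reg
    obtain ⟨ht, htE⟩ := regular_fst hxreg
    have hinl : (inl x.fst : TrivSqZeroExt A E) ∈ 𝓘 := inl_fst_mem_of_mem hE hxI ht htE
    have hker : RingHom.ker (pr A E) ≤ 𝓘 := ker_le_of_inl_mem hE hinl ht htE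
    have h𝓘 : (𝓘.map (pr A E)).comap (pr A E) = 𝓘 := comap_map_eq pr_surjective hker
    have hItop : 𝓘.map (pr A E) ≠ ⊤ := map_ne_top pr_surjective hker h𝓘top
    have htI : x.fst ∈ 𝓘.map (pr A E) := Ideal.mem_map_of_mem _ hxI
    obtain ⟨J, L, hJ, hLne, hL, heq⟩ := hA _ hItop ⟨x.fst, htI, ht, htE⟩
    have hIJ : 𝓘.map (pr A E) ≤ J := heq ▸ Ideal.mul_le_left
    have hIL : 𝓘.map (pr A E) ≤ L.prod := heq ▸ Ideal.mul_le_right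
    refine ⟨J.comap (pr A E), L.map (Ideal.comap (pr A E)),
      invertible_up hE (hIJ htI) ht htE hJ, by simpa using hLne, ?_, ?_⟩
    · rintro H hH
      obtain ⟨H₀, hH₀, rfl⟩ := List.mem_map.mp hH
      obtain ⟨hH₀top, hH₀rad⟩ := hL _ hH₀
      refine ⟨fun h => hH₀top ?_, hH₀rad.comap _⟩
      rw [Ideal.eq_top_iff_one] at h ⊢
      simpa using h
    · rw [← h𝓘, heq, comap_mul hE (hIJ htI) (hIL htI) ht htE ht htE,
        comap_list_prod hE ht htE L (hIL htI)]
end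

section
/- Let A be an integral domain with quotient field K, let E be a K-vector space regarded as an A-module, and let R = A∝E be the trivial ring extension. Then R is an ISP-ring if and only if A is an ISP-domain. -/
open TrivSqZeroExt

open TrivSqZeroExt

set_option linter.unusedSectionVars false

namespace ISPAux

variable {A K E : Type*} [CommRing A] [IsDomain A]
    [Field K] [Algebra A K] [IsFractionRing A K]
    [AddCommGroup E] [Module K E] [Module A E] [IsScalarTower A K E]
    [Module Aᵐᵒᵖ E] [IsCentralScalar A E]

/-- The projection `A ∝ E → A` as a ring hom. -/
def π : TrivSqZeroExt A E →+* A where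
  toFun := fst
  map_one' := rfl
  map_mul' := fun _ _ => rfl
  map_zero' := rfl
  map_add' := fun _ _ => rfl

@[simp] theorem π_apply (x : TrivSqZeroExt A E) : π x = x.fst := rfl

theorem π_surjective : Function.Surjective (π (A := A) (E := E)) :=
  fun a => ⟨inl a, fst_inl E a⟩

include K in
theorem a_smul_surj (a : A) (ha : a ≠ 0) (e : E) : ∃ f : E, a • f = e := by
  refine ⟨(algebraMap A K a)⁻¹ • e, ?_⟩
  rw [← IsScalarTower.algebraMap_smul K a, smul_smul, mul_inv_cancel₀, one_smul]
  exact (map_ne_zero_iff _ (IsFractionRing.injective A K)).mpr ha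

include K in
theorem a_smul_inj {a : A} (ha : a ≠ 0) {e : E} (h : a • e = 0) : e = 0 := by
  rw [← IsScalarTower.algebraMap_smul K a, smul_eq_zero] at h
  rcases h with h | h
  · exact absurd ((map_eq_zero_iff _ (IsFractionRing.injective A K)).mp h) ha
  · exact h

include K in
theorem mem_nonZeroDivisors_of_fst {x : TrivSqZeroExt A E} (hx : x.fst ≠ 0) :
    x ∈ nonZeroDivisors (TrivSqZeroExt A E) := by
  rw [mem_nonZeroDivisors_iff_right]
  intro z hz
  have h1 : z.fst * x.fst = 0 := congrArg fst hz
  have h2 : z.fst = 0 := by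
    rcases mul_eq_zero.mp h1 with h | h
    · exact h
    · exact absurd h hx
  have h3 : x.fst • z.snd = 0 := by
    have := congrArg snd hz
    rw [snd_mul, h2, zero_smul, zero_add, op_smul_eq_smul] at this
    exact this
  have h4 : z.snd = 0 := a_smul_inj (K := K) hx h3
  exact TrivSqZeroExt.ext h2 h4

theorem fst_ne_zero_of_mem_nonZeroDivisors {x : TrivSqZeroExt A E}
    (hx : x ∈ nonZeroDivisors (TrivSqZeroExt A E)) : x.fst ≠ 0 := by
  intro h0
  have hxx : x * x = 0 := TrivSqZeroExt.ext (by simp [h0]) (by simp [h0])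
  have hx0 : x = 0 := mem_nonZeroDivisors_iff_right.mp hx x hxx
  have : (1 : TrivSqZeroExt A E) = 0 := mem_nonZeroDivisors_iff_right.mp hx 1 (by rw [hx0, mul_zero])
  exact one_ne_zero (congrArg fst this)

include K in
theorem inr_mem_of_mem {I : Ideal (TrivSqZeroExt A E)} {x : TrivSqZeroExt A E}
    (hx : x ∈ I) (hfst : x.fst ≠ 0) (e : E) : inr e ∈ I := by
  obtain ⟨f, hf⟩ := a_smul_surj (K := K) x.fst hfst e
  have hmul : x * inr f = inr e := by
    refine TrivSqZeroExt.ext ?_ ?_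
    · simp
    · simp [op_smul_eq_smul, hf]
  exact hmul ▸ I.mul_mem_right (inr f) hx

include K in
theorem comap_π_eq_map_inl {J : Ideal A} (hJ : J ≠ ⊥) :
    Ideal.comap (π (A := A) (E := E)) J = Ideal.map (inlHom A E) J := by
  obtain ⟨a, haJ, ha⟩ := Submodule.exists_mem_ne_zero_of_ne_bot hJ
  apply le_antisymm
  · intro x hx
    have h1 : inl x.fst ∈ Ideal.map (inlHom A E) J := Ideal.mem_map_of_mem _ hx
    have h2 : inr x.snd ∈ Ideal.map (inlHom A E) J :=
      inr_mem_of_mem (K := K) (Ideal.mem_map_of_mem (inlHom A E) haJ)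
        (by simpa using ha) x.snd
    have := Ideal.add_mem _ h1 h2
    rwa [inl_fst_add_inr_snd_eq] at this
  · rw [Ideal.map_le_iff_le_comap]
    intro b hb
    simpa using hb

theorem ideal_map_list_prod {B C : Type*} [CommRing B] [CommRing C] (f : B →+* C) :
    ∀ L : List (Ideal B), Ideal.map f L.prod = (L.map (Ideal.map f)).prod
  | [] => by simp [Ideal.one_eq_top, Ideal.map_top]
  | (I :: t) => by
      simp only [List.prod_cons, List.map_cons, Ideal.map_mul]
      rw [ideal_map_list_prod f t]

theorem list_prod_le {B : Type*} [CommRing B] {H : Ideal B} :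
    ∀ {L : List (Ideal B)}, H ∈ L → L.prod ≤ H
  | [], h => absurd h List.not_mem_nil
  | (I :: t), h => by
      rcases List.mem_cons.mp h with rfl | h
      · simpa [List.prod_cons] using Ideal.mul_le_left
      · refine le_trans ?_ (list_prod_le h)
        rw [List.prod_cons]
        exact Ideal.mul_le_right

theorem kerle {I : Ideal (TrivSqZeroExt A E)} (h : ∀ e : E, inr e ∈ I) :
    Ideal.comap (π (A := A) (E := E)) ⊥ ≤ I := by
  intro x hx
  have h0 : x.fst = 0 := hx
  have hx' : x = inr x.snd := by
    conv_lhs => rw [← inl_fst_add_inr_snd_eq x]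
    rw [h0, inl_zero, zero_add]
  rw [hx']
  exact h _

theorem eq_comap_of_inr_mem {I : Ideal (TrivSqZeroExt A E)} (h : ∀ e : E, inr e ∈ I) :
    Ideal.comap (π (A := A) (E := E)) (Ideal.map π I) = I := by
  rw [Ideal.comap_map_of_surjective (π (A := A) (E := E)) π_surjective I]
  exact sup_eq_left.mpr (kerle h)

theorem inr_mem_of_isMaximal {M' : Ideal (TrivSqZeroExt A E)} (hM' : M'.IsMaximal)
    (e : E) : inr e ∈ M' := by
  have h0 : (inr e : TrivSqZeroExt A E) * inr e ∈ M' := by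
    rw [inr_mul_inr]
    exact M'.zero_mem
  rcases hM'.isPrime.mem_or_mem h0 with h | h <;> exact h

include K in
theorem map_inl_locally_principal {J₀ : Ideal A}
    (hloc : ∀ M : Ideal A, ∀ hM : M.IsMaximal,
      haveI := hM.isPrime
      (J₀.map (algebraMap A (Localization.AtPrime M))).IsPrincipal)
    (M' : Ideal (TrivSqZeroExt A E)) (hM' : M'.IsMaximal) :
    haveI := hM'.isPrime
    ((Ideal.map (inlHom A E) J₀).map
      (algebraMap (TrivSqZeroExt A E) (Localization.AtPrime M'))).IsPrincipal := by
  haveI := hM'.isPrime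
  have hM'eq : Ideal.comap (π (A := A) (E := E)) (Ideal.map π M') = M' :=
    eq_comap_of_inr_mem (inr_mem_of_isMaximal hM')
  have hMne : Ideal.map (π (A := A) (E := E)) M' ≠ ⊤ := fun h =>
    hM'.ne_top (by rw [← hM'eq, h, Ideal.comap_top])
  have hMmax : (Ideal.map (π (A := A) (E := E)) M').IsMaximal := by
    rcases Ideal.map_eq_top_or_isMaximal_of_surjective π π_surjective hM' with h | h
    · exact absurd h hMne
    · exact h
  haveI := hMmax.isPrime
  have hg : ∀ y : (Ideal.map (π (A := A) (E := E)) M').primeCompl,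
      IsUnit (((algebraMap (TrivSqZeroExt A E) (Localization.AtPrime M')).comp
        (inlHom A E)) y) := by
    rintro ⟨y, hy⟩
    have hnm : inl y ∉ M' := fun hmem => hy (by simpa using Ideal.mem_map_of_mem π hmem)
    exact IsLocalization.map_units (Localization.AtPrime M')
      (⟨inl y, hnm⟩ : M'.primeCompl)
  obtain ⟨ξ, hξ⟩ := (hloc _ hMmax).1
  have key : ((Ideal.map (inlHom A E) J₀).map
      (algebraMap (TrivSqZeroExt A E) (Localization.AtPrime M'))) =
      Ideal.map (IsLocalization.lift hg)
        (J₀.map (algebraMap A (Localization.AtPrime (Ideal.map (π (A := A) (E := E)) M')))) := by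
    rw [Ideal.map_map, Ideal.map_map, IsLocalization.lift_comp]
  rw [key, hξ]
  rw [show Submodule.span (Localization.AtPrime (Ideal.map (π (A := A) (E := E)) M')) {ξ}
      = Ideal.span {ξ} from rfl, Ideal.map_span, Set.image_singleton]
  exact ⟨⟨_, rfl⟩⟩

theorem map_π_locally_principal {J' : Ideal (TrivSqZeroExt A E)}
    (hloc : ∀ M' : Ideal (TrivSqZeroExt A E), ∀ hM' : M'.IsMaximal,
      haveI := hM'.isPrime
      (J'.map (algebraMap (TrivSqZeroExt A E) (Localization.AtPrime M'))).IsPrincipal)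
    (M : Ideal A) (hM : M.IsMaximal) :
    haveI := hM.isPrime
    ((Ideal.map (π (A := A) (E := E)) J').map
      (algebraMap A (Localization.AtPrime M))).IsPrincipal := by
  haveI := hM.isPrime
  have hM' : (Ideal.comap (π (A := A) (E := E)) M).IsMaximal :=
    Ideal.comap_isMaximal_of_surjective π π_surjective
  haveI := hM'.isPrime
  have hg : ∀ y : (Ideal.comap (π (A := A) (E := E)) M).primeCompl,
      IsUnit (((algebraMap A (Localization.AtPrime M)).comp (π (A := A) (E := E))) y) := by
    rintro ⟨y, hy⟩
    exact IsLocalization.map_units (Localization.AtPrime M) (⟨π y, hy⟩ : M.primeCompl)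
  obtain ⟨ξ, hξ⟩ := (hloc _ hM').1
  have key : ((Ideal.map (π (A := A) (E := E)) J').map
      (algebraMap A (Localization.AtPrime M))) =
      Ideal.map (IsLocalization.lift hg)
        (J'.map (algebraMap (TrivSqZeroExt A E)
          (Localization.AtPrime (Ideal.comap (π (A := A) (E := E)) M)))) := by
    rw [Ideal.map_map, Ideal.map_map, IsLocalization.lift_comp]
  rw [key, hξ]
  rw [show Submodule.span (Localization.AtPrime (Ideal.comap (π (A := A) (E := E)) M)) {ξ}
      = Ideal.span {ξ} from rfl, Ideal.map_span, Set.image_singleton]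
  exact ⟨⟨_, rfl⟩⟩

theorem map_π_isRadical {H : Ideal (TrivSqZeroExt A E)} (hrad : H.IsRadical)
    (hker : Ideal.comap (π (A := A) (E := E)) ⊥ ≤ H) :
    (Ideal.map (π (A := A) (E := E)) H).IsRadical := by
  intro x hx
  obtain ⟨n, hn⟩ := Ideal.mem_radical_iff.mp hx
  obtain ⟨y, rfl⟩ := π_surjective (A := A) (E := E) x
  have h1 : y ^ n ∈ Ideal.comap (π (A := A) (E := E)) (Ideal.map π H) := by
    simpa [map_pow] using hn
  rw [Ideal.comap_map_of_surjective (π (A := A) (E := E)) π_surjective H,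
    sup_eq_left.mpr hker] at h1
  exact Ideal.mem_map_of_mem _ (hrad ⟨n, h1⟩)

end ISPAux

open TrivSqZeroExt ISPAux in
theorem trivSqZeroExt_isISPRing_iff_isISPDomain' {A K E : Type*} [CommRing A] [IsDomain A]
    [Field K] [Algebra A K] [IsFractionRing A K]
    [AddCommGroup E] [Module K E] [Module A E] [IsScalarTower A K E]
    [Module Aᵐᵒᵖ E] [IsCentralScalar A E] :
    IsISPRing (TrivSqZeroExt A E) ↔ IsISPDomain A := by
  constructor
  · -- R ISP → A ISP
    intro hR
    refine ⟨inferInstance, fun Ja hJtop hJbot => ?_⟩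
    obtain ⟨a, haJ, ha⟩ := Submodule.exists_mem_ne_zero_of_ne_bot hJbot
    set I := Ideal.comap (π (A := A) (E := E)) Ja with hIdef
    have hItop : I ≠ ⊤ := by
      intro h
      apply hJtop
      rw [Ideal.eq_top_iff_one]
      have h1 : (1 : TrivSqZeroExt A E) ∈ I := h ▸ Submodule.mem_top
      simpa [hIdef] using h1
    have hIreg : I.IsRegularIdeal :=
      ⟨inl a, by simpa [hIdef] using haJ,
        mem_nonZeroDivisors_of_fst (K := K) (by simpa using ha)⟩
    obtain ⟨J', L, hJ'inv, hLne, hLprop, hIeq⟩ := hR I hItop hIreg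
    refine ⟨Ideal.map (π (A := A) (E := E)) J',
      L.map (Ideal.map (π (A := A) (E := E))), ?_, ?_, ?_, ?_⟩
    · obtain ⟨x, hxJ', hxreg⟩ := hJ'inv.1
      exact ⟨⟨π x, Ideal.mem_map_of_mem _ hxJ',
        mem_nonZeroDivisors_of_ne_zero
          (by simpa using fst_ne_zero_of_mem_nonZeroDivisors hxreg)⟩,
        hJ'inv.2.1.map _, map_π_locally_principal hJ'inv.2.2⟩
    · simpa using hLne
    · intro H' hH'
      obtain ⟨H, hHL, rfl⟩ := List.mem_map.mp hH'
      have hIH : I ≤ H := by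
        rw [hIeq]
        exact le_trans Ideal.mul_le_right (list_prod_le hHL)
      have hkerH : Ideal.comap (π (A := A) (E := E)) ⊥ ≤ H :=
        le_trans (Ideal.comap_mono bot_le) hIH
      have hcm : Ideal.comap (π (A := A) (E := E)) (Ideal.map π H) = H := by
        rw [Ideal.comap_map_of_surjective (π (A := A) (E := E)) π_surjective H]
        exact sup_eq_left.mpr hkerH
      refine ⟨?_, map_π_isRadical (hLprop H hHL).2 hkerH⟩
      intro htop
      exact (hLprop H hHL).1 (by rw [← hcm, htop, Ideal.comap_top])
    · have h1 : Ja = Ideal.map (π (A := A) (E := E)) I :=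
        (Ideal.map_comap_of_surjective (π (A := A) (E := E)) π_surjective Ja).symm
      rw [h1, hIeq, Ideal.map_mul, ideal_map_list_prod]
  · -- A ISP → R ISP
    intro hA I hItop hIreg
    obtain ⟨x, hxI, hxreg⟩ := hIreg
    have hfst := fst_ne_zero_of_mem_nonZeroDivisors hxreg
    have hker : ∀ e : E, inr e ∈ I := inr_mem_of_mem (K := K) hxI hfst
    have hI : Ideal.comap (π (A := A) (E := E)) (Ideal.map π I) = I :=
      eq_comap_of_inr_mem hker
    have hJatop : Ideal.map (π (A := A) (E := E)) I ≠ ⊤ := by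
      intro h
      apply hItop
      rw [← hI, h]
      exact Ideal.comap_top
    have hJabot : Ideal.map (π (A := A) (E := E)) I ≠ ⊥ := by
      intro h
      have hmem : π x ∈ Ideal.map (π (A := A) (E := E)) I := Ideal.mem_map_of_mem _ hxI
      rw [h] at hmem
      exact hfst (by simpa using hmem)
    obtain ⟨J₀, L, hJ₀inv, hLne, hLprop, hfac⟩ := hA.2 _ hJatop hJabot
    have hLbot : ∀ H ∈ L, H ≠ ⊥ := by
      intro H hHL h
      have hle : Ideal.map (π (A := A) (E := E)) I ≤ ⊥ := by
        rw [hfac]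
        exact le_trans Ideal.mul_le_right (le_trans (list_prod_le hHL) h.le)
      exact hJabot (le_bot_iff.mp hle)
    refine ⟨Ideal.map (inlHom A E) J₀, L.map (Ideal.map (inlHom A E)), ?_, ?_, ?_, ?_⟩
    · obtain ⟨b, hbJ₀, hbreg⟩ := hJ₀inv.1
      exact ⟨⟨inl b, Ideal.mem_map_of_mem _ hbJ₀,
          mem_nonZeroDivisors_of_fst (K := K)
            (by simpa using nonZeroDivisors.ne_zero hbreg)⟩,
        hJ₀inv.2.1.map _, map_inl_locally_principal (K := K) hJ₀inv.2.2⟩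
    · simpa using hLne
    · intro H' hH'
      obtain ⟨H, hHL, rfl⟩ := List.mem_map.mp hH'
      rw [← comap_π_eq_map_inl (K := K) (hLbot H hHL)]
      refine ⟨?_, (hLprop H hHL).2.comap _⟩
      intro h
      apply (hLprop H hHL).1
      rw [Ideal.eq_top_iff_one]
      have h1 : (1 : TrivSqZeroExt A E) ∈ Ideal.comap (π (A := A) (E := E)) H :=
        h ▸ Submodule.mem_top
      simpa using h1
    · rw [← hI, hfac,
        comap_π_eq_map_inl (K := K) (hfac ▸ hJabot), Ideal.map_mul, ideal_map_list_prod]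

/-- If `A` is an integral domain with quotient field `K` and `E` is a `K`-vector space
(viewed as an `A`-module), then `A ∝ E` is an ISP-ring iff `A` is an ISP-domain. -/
theorem trivSqZeroExt_isISPRing_iff_isISPDomain {A K E : Type*} [CommRing A] [IsDomain A]
    [Field K] [Algebra A K] [IsFractionRing A K]
    [AddCommGroup E] [Module K E] [Module A E] [IsScalarTower A K E]
    [Module Aᵐᵒᵖ E] [IsCentralScalar A E] :
    IsISPRing (TrivSqZeroExt A E) ↔ IsISPDomain A := by
  exact trivSqZeroExt_isISPRing_iff_isISPDomain' (K := K)
end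

section
/- Let A be a commutative ring and I an ideal of A. The following are equivalent: (1) every regular ideal of the amalgamated duplication A⋈I has the form H⋈I for some regular ideal H of A; (2) I = aI for every regular element a of A. -/
/-- The amalgamated duplication `A ⋈ I` of a ring `A` along an ideal `I`, realized as
the subring `{(a, a + i) : a ∈ A, i ∈ I}` of `A × A`. -/
def AmalgDup {A : Type*} [CommRing A] (I : Ideal A) : Subring (A × A) where
  carrier := {p | p.2 - p.1 ∈ I}
  zero_mem' := by simp
  one_mem' := by simp
  add_mem' := by
    intro a b ha hb
    show (a + b).2 - (a + b).1 ∈ I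
    have h : (a + b).2 - (a + b).1 = (a.2 - a.1) + (b.2 - b.1) := by
      simp; ring
    rw [h]; exact I.add_mem ha hb
  neg_mem' := by
    intro a ha
    show (-a).2 - (-a).1 ∈ I
    have h : (-a).2 - (-a).1 = -(a.2 - a.1) := by
      simp only [Prod.fst_neg, Prod.snd_neg]; ring
    rw [h]; exact I.neg_mem ha
  mul_mem' := by
    intro a b ha hb
    show (a * b).2 - (a * b).1 ∈ I
    have h : (a * b).2 - (a * b).1 = a.2 * (b.2 - b.1) + (a.2 - a.1) * b.1 := by
      simp; ring
    rw [h]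
    exact I.add_mem (I.mul_mem_left _ hb) (I.mul_mem_right _ ha)

/-- The ideal `H ⋈ I = {(h, h + i) : h ∈ H, i ∈ I}` of the amalgamated duplication `A ⋈ I`. -/
def Ideal.amalgDup {A : Type*} [CommRing A] (H I : Ideal A) : Ideal (AmalgDup I) where
  carrier := {x | (x : A × A).1 ∈ H}
  zero_mem' := H.zero_mem
  add_mem' := fun ha hb => H.add_mem ha hb
  smul_mem' := fun c x hx => by
    show ((c * x : AmalgDup I) : A × A).1 ∈ H
    push_cast
    exact H.mul_mem_left _ hx

/-! The first projection `A ⋈ I → A` has kernel `0 × I`, so an ideal of `A ⋈ I` has the form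
`H ⋈ I` exactly when it contains this kernel. For any `a`, the kernel lies in the principal ideal
generated by the diagonal element `(a, a)` iff `I ⊆ aI`, and `(a, a)` is regular iff `a` is.
Finally, a regular ideal of `A ⋈ I` always contains a regular diagonal element: if `z = (x, y)`
is regular then so is its swap `(y, x)`, and `z * (y, x) = (xy, xy)`. -/

namespace AmalgDup

variable {A : Type*} [CommRing A]

lemma mem_iff {I : Ideal A} (p : A × A) : p ∈ AmalgDup I ↔ p.2 - p.1 ∈ I := Iff.rfl

section

variable (I : Ideal A)

def fst : AmalgDup I →+* A := (RingHom.fst A A).comp (AmalgDup I).subtype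

def diag : A →+* AmalgDup I :=
  ((RingHom.id A).prod (RingHom.id A)).codRestrict (AmalgDup I) fun a => by simp [mem_iff]

def swap : AmalgDup I ≃+* AmalgDup I where
  toFun x := ⟨(x : A × A).swap, by simpa [mem_iff] using I.neg_mem x.2⟩
  invFun x := ⟨(x : A × A).swap, by simpa [mem_iff] using I.neg_mem x.2⟩
  left_inv _ := rfl
  right_inv _ := rfl
  map_mul' _ _ := rfl
  map_add' _ _ := rfl

end

variable {I : Ideal A}

@[simp] lemma coe_diag (a : A) : (diag I a : A × A) = (a, a) := rfl

lemma fst_surjective : Function.Surjective (fst I) := fun a => ⟨diag I a, rfl⟩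

lemma mem_ker_fst {x : AmalgDup I} : x ∈ RingHom.ker (fst I) ↔ (x : A × A).1 = 0 := Iff.rfl

lemma mul_swap_self (z : AmalgDup I) :
    z * swap I z = diag I ((z : A × A).1 * (z : A × A).2) :=
  Subtype.ext <| Prod.ext rfl (mul_comm _ _)

lemma diag_mem_nonZeroDivisors_iff {a : A} :
    diag I a ∈ nonZeroDivisors (AmalgDup I) ↔ a ∈ nonZeroDivisors A := by
  simp only [mem_nonZeroDivisors_iff_right]
  constructor
  · intro h u hu
    have hdiag : diag I u = 0 := h _ (by rw [← map_mul, hu, map_zero])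
    simpa using congrArg (fun x : AmalgDup I => (x : A × A).1) hdiag
  · intro h w hw
    have hw' := congrArg Subtype.val hw
    exact Subtype.ext <| Prod.ext (h _ (congrArg Prod.fst hw')) (h _ (congrArg Prod.snd hw'))

lemma swap_mem_nonZeroDivisors {z : AmalgDup I} (hz : z ∈ nonZeroDivisors (AmalgDup I)) :
    swap I z ∈ nonZeroDivisors (AmalgDup I) :=
  MulEquivClass.map_nonZeroDivisors (swap I) ▸ Submonoid.mem_map_of_mem _ hz

lemma ker_fst_le_span_diag_iff (a : A) :
    RingHom.ker (fst I) ≤ Ideal.span {diag I a} ↔ I ≤ Ideal.span {a} * I := by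
  constructor
  · intro h i hi
    obtain ⟨c, hc⟩ := Ideal.mem_span_singleton'.mp
      (h (x := ⟨(0, i), by simpa [mem_iff] using hi⟩) rfl)
    have hc' := congrArg Subtype.val hc
    have h₁ : (c : A × A).1 * a = 0 := congrArg Prod.fst hc'
    have h₂ : (c : A × A).2 * a = i := congrArg Prod.snd hc'
    exact Ideal.mem_span_singleton_mul.mpr ⟨_, c.2, by linear_combination h₂ - h₁⟩
  · intro h x hx
    have hx₁ : (x : A × A).1 = 0 := mem_ker_fst.mp hx
    have hx₂ : (x : A × A).2 ∈ I := by simpa [hx₁] using (mem_iff _).mp x.2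
    obtain ⟨i, hi, hai⟩ := Ideal.mem_span_singleton_mul.mp (h hx₂)
    refine Ideal.mem_span_singleton'.mpr ⟨⟨(0, i), by simpa [mem_iff] using hi⟩, ?_⟩
    exact Subtype.ext <| Prod.ext (by simp [hx₁]) (by simp [← hai, mul_comm])

lemma ker_fst_le_amalgDup (H : Ideal A) : RingHom.ker (fst I) ≤ H.amalgDup I :=
  fun x hx => (mem_ker_fst.mp hx ▸ H.zero_mem : (x : A × A).1 ∈ H)

lemma eq_amalgDup_map_fst {J : Ideal (AmalgDup I)} (hJ : RingHom.ker (fst I) ≤ J) :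
    J = (J.map (fst I)).amalgDup I := by
  have := Ideal.comap_map_of_surjective' (fst I) fst_surjective J
  rw [sup_eq_left.mpr hJ] at this
  exact this.symm

end AmalgDup

open AmalgDup

/-- Every regular ideal of `A ⋈ I` has the form `H ⋈ I` with `H` a regular ideal of `A`
if and only if `I = aI` for every regular element `a` of `A`. -/
theorem amalgDup_regular_ideals_iff {A : Type*} [CommRing A] (I : Ideal A) :
    (∀ J : Ideal (AmalgDup I), J.IsRegularIdeal →
        ∃ H : Ideal A, H.IsRegularIdeal ∧ J = H.amalgDup I) ↔
      ∀ a ∈ nonZeroDivisors A, I = Ideal.span {a} * I := by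
  constructor
  · intro h a ha
    obtain ⟨H, -, hJ⟩ := h (Ideal.span {diag I a})
      ⟨_, Ideal.mem_span_singleton_self _, diag_mem_nonZeroDivisors_iff.mpr ha⟩
    have hker : RingHom.ker (fst I) ≤ Ideal.span {diag I a} := hJ ▸ ker_fst_le_amalgDup H
    exact le_antisymm ((ker_fst_le_span_diag_iff a).mp hker) Ideal.mul_le_right
  · rintro h J ⟨z, hzJ, hz⟩
    set b := (z : A × A).1 * (z : A × A).2
    have hbJ : diag I b ∈ J := mul_swap_self z ▸ J.mul_mem_right _ hzJ
    have hb : b ∈ nonZeroDivisors A := diag_mem_nonZeroDivisors_iff.mp <|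
      mul_swap_self z ▸ mul_mem hz (swap_mem_nonZeroDivisors hz)
    have hker : RingHom.ker (fst I) ≤ J :=
      ((ker_fst_le_span_diag_iff b).mpr (h b hb).le).trans
        ((Ideal.span_singleton_le_iff_mem J).mpr hbJ)
    exact ⟨J.map (fst I), ⟨b, Ideal.mem_map_of_mem _ hbJ, hb⟩, eq_amalgDup_map_fst hker⟩
end

section
/- Let A be a commutative ring and I an ideal of A. (1) If the amalgamated duplication A⋈I is an ISP-ring, then A is an ISP-ring. (2) If moreover I = aI for every regular element a of A, then A⋈I is an ISP-ring if and only if A is an ISP-ring. -/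
set_option synthInstance.maxHeartbeats 1000000

namespace AmalgDupISP

variable {A : Type*} [CommRing A] (I : Ideal A)

/-- The first projection `A ⋈ I → A`. -/
def π : AmalgDup I →+* A := (RingHom.fst A A).comp (AmalgDup I).subtype

/-- The diagonal embedding `A → A ⋈ I`. -/
def δ : A →+* AmalgDup I where
  toFun a := ⟨(a, a), by show a - a ∈ I; simp⟩
  map_one' := rfl
  map_mul' _ _ := rfl
  map_zero' := rfl
  map_add' _ _ := rfl

lemma sub_mem_of_mem (x : AmalgDup I) : (x : A × A).2 - (x : A × A).1 ∈ I := x.2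

lemma π_surjective : Function.Surjective (π I) := fun a => ⟨δ I a, rfl⟩

/-- The element `(0, i)` of `A ⋈ I`. -/
def ofK (i : A) (hi : i ∈ I) : AmalgDup I := ⟨(0, i), by show i - 0 ∈ I; simpa⟩

lemma ofK_congr {i j : A} (hi : i ∈ I) (hj : j ∈ I) (h : i = j) :
    ofK I i hi = ofK I j hj := by subst h; rfl

lemma decomp (x : AmalgDup I) :
    x = δ I (x : A × A).1 + ofK I _ (sub_mem_of_mem I x) := by
  apply Subtype.ext
  show (x : A × A) = ((x : A × A).1, (x : A × A).1) + (0, (x : A × A).2 - (x : A × A).1)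
  rw [Prod.mk_add_mk]
  have : (x : A × A) = ((x : A × A).1, (x : A × A).2) := rfl
  rw [this]
  simp only [Prod.mk.injEq]
  constructor <;> ring

lemma fst_mem_nonZeroDivisors {x : AmalgDup I}
    (hx : x ∈ nonZeroDivisors (AmalgDup I)) : (x : A × A).1 ∈ nonZeroDivisors A := by
  rw [mem_nonZeroDivisors_iff_right] at hx ⊢
  set a := (x : A × A).1
  set b := (x : A × A).2
  intro z hz
  have hiz : (b - a) * z ∈ I := I.mul_mem_right z (sub_mem_of_mem I x)
  by_cases h : (b - a) * z = 0
  · have h1 : δ I z * x = 0 := by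
      apply Subtype.ext
      show (z * a, z * b) = ((0, 0) : A × A)
      simp only [Prod.mk.injEq]
      exact ⟨hz, by linear_combination hz + h⟩
    exact congrArg (fun w : AmalgDup I => (w : A × A).1) (hx _ h1)
  · exfalso
    have hu : (0 : A) - (b - a) * z ∈ I := by rw [zero_sub]; exact I.neg_mem hiz
    have h1 : (⟨((b - a) * z, 0), hu⟩ : AmalgDup I) * x = 0 := by
      apply Subtype.ext
      show ((b - a) * z * a, 0 * b) = ((0, 0) : A × A)
      simp only [Prod.mk.injEq]
      exact ⟨by linear_combination (b - a) * hz, by ring⟩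
    exact h (congrArg (fun w : AmalgDup I => (w : A × A).1) (hx _ h1))

lemma snd_mem_nonZeroDivisors {x : AmalgDup I}
    (hx : x ∈ nonZeroDivisors (AmalgDup I)) : (x : A × A).2 ∈ nonZeroDivisors A := by
  rw [mem_nonZeroDivisors_iff_right] at hx ⊢
  set a := (x : A × A).1
  set b := (x : A × A).2
  intro z hz
  have hiz : (b - a) * z ∈ I := I.mul_mem_right z (sub_mem_of_mem I x)
  by_cases h : (b - a) * z = 0
  · have h1 : δ I z * x = 0 := by
      apply Subtype.ext
      show (z * a, z * b) = ((0, 0) : A × A)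
      simp only [Prod.mk.injEq]
      exact ⟨by linear_combination hz - h, hz⟩
    exact congrArg (fun w : AmalgDup I => (w : A × A).1) (hx _ h1)
  · exfalso
    have hu : (b - a) * z - 0 ∈ I := by rw [sub_zero]; exact hiz
    have h1 : (⟨(0, (b - a) * z), hu⟩ : AmalgDup I) * x = 0 := by
      apply Subtype.ext
      show (0 * a, (b - a) * z * b) = ((0, 0) : A × A)
      simp only [Prod.mk.injEq]
      exact ⟨by ring, by linear_combination (b - a) * hz⟩
    exact h (congrArg (fun w : AmalgDup I => (w : A × A).2) (hx _ h1))

lemma δ_mem_nonZeroDivisors {a : A} (ha : a ∈ nonZeroDivisors A) :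
    δ I a ∈ nonZeroDivisors (AmalgDup I) := by
  rw [mem_nonZeroDivisors_iff_right] at ha ⊢
  intro z hz
  have h2 : (((z : A × A).1 * a, (z : A × A).2 * a) : A × A) = 0 := by
    have h1 : ((z * δ I a : AmalgDup I) : A × A)
        = ((z : A × A).1 * a, (z : A × A).2 * a) := rfl
    rw [← h1, hz]; rfl
  rw [Prod.ext_iff] at h2
  apply Subtype.ext
  show (z : A × A) = ((0, 0) : A × A)
  have : (z : A × A) = ((z : A × A).1, (z : A × A).2) := rfl
  rw [this, Prod.ext_iff]
  exact ⟨ha _ h2.1, ha _ h2.2⟩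

lemma map_π_eq_comap_δ {H : Ideal (AmalgDup I)}
    (hK : ∀ i (hi : i ∈ I), ofK I i hi ∈ H) : H.map (π I) = H.comap (δ I) := by
  apply le_antisymm
  · rw [Ideal.map_le_iff_le_comap]
    intro x hx
    show δ I ((π I) x) ∈ H
    have hd : δ I ((x : A × A).1) = x - ofK I _ (sub_mem_of_mem I x) :=
      eq_sub_of_add_eq (decomp I x).symm
    show δ I ((x : A × A).1) ∈ H
    rw [hd]
    exact H.sub_mem hx (hK _ _)
  · intro a ha
    exact Ideal.mem_map_of_mem (π I) ha

lemma mem_of_fst_mem_map {H : Ideal (AmalgDup I)}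
    (hK : ∀ i (hi : i ∈ I), ofK I i hi ∈ H) {x : AmalgDup I}
    (hx : (x : A × A).1 ∈ H.map (π I)) : x ∈ H := by
  rw [map_π_eq_comap_δ I hK] at hx
  have h1 : δ I ((x : A × A).1) ∈ H := hx
  rw [decomp I x]
  exact H.add_mem h1 (hK _ _)

lemma map_π_ne_top {H : Ideal (AmalgDup I)}
    (hK : ∀ i (hi : i ∈ I), ofK I i hi ∈ H) (hH : H ≠ ⊤) : H.map (π I) ≠ ⊤ := by
  intro htop
  apply hH
  rw [Ideal.eq_top_iff_one] at htop ⊢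
  rw [map_π_eq_comap_δ I hK] at htop
  rwa [Ideal.mem_comap, map_one] at htop

lemma map_π_isRadical {H : Ideal (AmalgDup I)}
    (hK : ∀ i (hi : i ∈ I), ofK I i hi ∈ H) (hH : H.IsRadical) :
    (H.map (π I)).IsRadical := by
  rintro a ⟨n, hn⟩
  rw [map_π_eq_comap_δ I hK] at hn ⊢
  rw [Ideal.mem_comap] at hn ⊢
  rw [map_pow] at hn
  exact hH ⟨n, hn⟩

lemma comap_π_ne_top {H' : Ideal A} (h : H' ≠ ⊤) : H'.comap (π I) ≠ ⊤ := by
  intro ht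
  apply h
  rw [Ideal.eq_top_iff_one] at ht ⊢
  rwa [Ideal.mem_comap, map_one] at ht

lemma comap_π_isRadical {H' : Ideal A} (h : H'.IsRadical) :
    (H'.comap (π I)).IsRadical := by
  rintro x ⟨n, hn⟩
  rw [Ideal.mem_comap] at hn ⊢
  rw [map_pow] at hn
  exact h ⟨n, hn⟩

section General

variable {R S : Type*} [CommRing R] [CommRing S]

lemma list_prod_map (f : R →+* S) (L : List (Ideal R)) :
    (L.prod).map f = (L.map (Ideal.map f)).prod := by
  induction L with
  | nil => simpa using Ideal.map_top f
  | cons h t ih => rw [List.prod_cons, Ideal.map_mul, ih, List.map_cons, List.prod_cons]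

lemma list_prod_le_of_mem {L : List (Ideal R)} {H : Ideal R} (h : H ∈ L) : L.prod ≤ H := by
  induction L with
  | nil => simp at h
  | cons h0 t ih =>
    rw [List.prod_cons]
    rcases List.mem_cons.mp h with rfl | hmem
    · exact Ideal.mul_le_left
    · exact le_trans Ideal.mul_le_right (ih hmem)

lemma comap_mul_le (f : R →+* S) (P Q : Ideal S) :
    P.comap f * Q.comap f ≤ (P * Q).comap f := by
  rw [Ideal.mul_le]
  intro r hr s hs
  rw [Ideal.mem_comap, map_mul]
  exact Ideal.mul_mem_mul hr hs

lemma list_prod_comap_le (f : R →+* S) (L : List (Ideal S)) :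
    (L.map (Ideal.comap f)).prod ≤ (L.prod).comap f := by
  induction L with
  | nil => simp
  | cons h t ih =>
    rw [List.map_cons, List.prod_cons, List.prod_cons]
    exact le_trans (Ideal.mul_mono_right ih) (comap_mul_le f _ _)

lemma isPrincipal_map (f : R →+* S) (J : Ideal R)
    (hmax : ∀ N : Ideal S, N.IsMaximal → (N.comap f).IsMaximal)
    (hloc : ∀ M : Ideal R, ∀ hM : M.IsMaximal,
      haveI := hM.isPrime
      (J.map (algebraMap R (Localization.AtPrime M))).IsPrincipal) :
    ∀ N : Ideal S, ∀ hN : N.IsMaximal,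
      haveI := hN.isPrime
      ((J.map f).map (algebraMap S (Localization.AtPrime N))).IsPrincipal := by
  intro N hN
  haveI := hN.isPrime
  have hMmax := hmax N hN
  haveI := hMmax.isPrime
  obtain ⟨x, hx⟩ := (hloc (N.comap f) hMmax).principal
  let g := Localization.localRingHom (N.comap f) N f rfl
  refine ⟨⟨g x, ?_⟩⟩
  have hcomm : (algebraMap S (Localization.AtPrime N)).comp f
      = g.comp (algebraMap R (Localization.AtPrime (N.comap f))) := by
    ext a
    exact (Localization.localRingHom_to_map (N.comap f) N f rfl a).symm
  rw [Ideal.map_map, hcomm, ← Ideal.map_map, hx, Ideal.submodule_span_eq, Ideal.map_span,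
    Set.image_singleton, Ideal.submodule_span_eq]

end General

lemma map_δ_le_comap_π (H' : Ideal A) : H'.map (δ I) ≤ H'.comap (π I) := by
  rw [Ideal.map_le_iff_le_comap]
  intro a ha
  exact ha

lemma list_map_δ_prod_le (L : List (Ideal A)) :
    (L.map (Ideal.map (δ I))).prod ≤ (L.map (Ideal.comap (π I))).prod := by
  induction L with
  | nil => simp
  | cons h t ih =>
    rw [List.map_cons, List.map_cons, List.prod_cons, List.prod_cons]
    exact Ideal.mul_mono (map_δ_le_comap_π I h) ih

lemma δ_isIntegral : (δ I).IsIntegral := by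
  intro x
  refine ⟨(Polynomial.X - Polynomial.C (x : A × A).1) *
      (Polynomial.X - Polynomial.C (x : A × A).2),
    (Polynomial.monic_X_sub_C _).mul (Polynomial.monic_X_sub_C _), ?_⟩
  rw [Polynomial.eval₂_mul, Polynomial.eval₂_sub, Polynomial.eval₂_sub, Polynomial.eval₂_X,
    Polynomial.eval₂_C, Polynomial.eval₂_C]
  apply Subtype.ext
  show (((x : A × A).1 - (x : A × A).1) * ((x : A × A).1 - (x : A × A).2),
      ((x : A × A).2 - (x : A × A).1) * ((x : A × A).2 - (x : A × A).2)) = ((0, 0) : A × A)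
  simp only [Prod.mk.injEq]
  constructor <;> ring

lemma pow_mul_mem (a : A) {J₀ : Ideal A} (ha0 : a ∈ J₀) (L : List (Ideal A))
    (hmem : ∀ H' ∈ L, a ∈ H') : ∀ i (hi : i ∈ I),
      ofK I (a ^ (L.length + 1) * i) (I.mul_mem_left _ hi)
        ∈ J₀.map (δ I) * (L.map (Ideal.comap (π I))).prod := by
  induction L with
  | nil =>
    intro i hi
    rw [List.map_nil, List.prod_nil, mul_one]
    have heq : ofK I (a ^ (List.length ([] : List (Ideal A)) + 1) * i) (I.mul_mem_left _ hi)
        = δ I a * ofK I i hi := by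
      apply Subtype.ext
      show ((0 : A), a ^ (0 + 1) * i) = (a * 0, a * i)
      simp only [Prod.mk.injEq]
      constructor <;> ring
    rw [heq]
    exact Ideal.mul_mem_right _ _ (Ideal.mem_map_of_mem _ ha0)
  | cons h t ih =>
    intro i hi
    have hk := ih (fun H' hH' => hmem H' (List.mem_cons_of_mem _ hH')) i hi
    have heq : ofK I (a ^ (List.length (h :: t) + 1) * i) (I.mul_mem_left _ hi)
        = δ I a * ofK I (a ^ (t.length + 1) * i) (I.mul_mem_left _ hi) := by
      apply Subtype.ext
      show ((0 : A), a ^ (t.length + 1 + 1) * i) = (a * 0, a * (a ^ (t.length + 1) * i))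
      simp only [Prod.mk.injEq]
      constructor <;> ring
    rw [heq, List.map_cons, List.prod_cons, mul_left_comm]
    exact Ideal.mul_mem_mul (show δ I a ∈ Ideal.comap (π I) h from hmem h List.mem_cons_self) hk

lemma pow_factor (a : A) (hI : I = Ideal.span {a} * I) :
    ∀ n : ℕ, ∀ i ∈ I, ∃ j ∈ I, i = a ^ n * j := by
  intro n
  induction n with
  | zero => exact fun i hi => ⟨i, hi, by rw [pow_zero, one_mul]⟩
  | succ n ih =>
    intro i hi
    rw [hI] at hi
    obtain ⟨z, hz, hza⟩ := Ideal.mem_span_singleton_mul.mp hi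
    obtain ⟨j, hj, hjz⟩ := ih z hz
    exact ⟨j, hj, by rw [← hza, hjz]; ring⟩

lemma part1 (hR : IsISPRing (AmalgDup I)) : IsISPRing A := by
  intro I₀ hI₀top hI₀reg
  set Ihat := I₀.comap (π I) with hIhat
  have hK : ∀ i (hi : i ∈ I), ofK I i hi ∈ Ihat := fun i hi => by
    show (π I) (ofK I i hi) ∈ I₀
    show (0 : A) ∈ I₀
    exact I₀.zero_mem
  have hIhattop : Ihat ≠ ⊤ := comap_π_ne_top I hI₀top
  obtain ⟨r, hrI₀, hrreg⟩ := hI₀reg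
  have hIhatreg : Ihat.IsRegularIdeal :=
    ⟨δ I r, Ideal.mem_comap.mpr hrI₀, δ_mem_nonZeroDivisors I hrreg⟩
  obtain ⟨J, L, ⟨hJreg, hJfg, hJloc⟩, hLne, hLmem, hprod⟩ := hR Ihat hIhattop hIhatreg
  have hKH : ∀ H ∈ L, ∀ i (hi : i ∈ I), ofK I i hi ∈ H := fun H hH i hi =>
    list_prod_le_of_mem hH (Ideal.mul_le_right (hprod ▸ hK i hi))
  have hmap : I₀ = Ihat.map (π I) :=
    (Ideal.map_comap_of_surjective (π I) (π_surjective I) I₀).symm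
  refine ⟨J.map (π I), L.map (Ideal.map (π I)), ⟨?_, hJfg.map _, ?_⟩, ?_, ?_, ?_⟩
  · refine ⟨r, ?_, hrreg⟩
    have hle : I₀ ≤ J.map (π I) := by
      rw [hmap, hprod, Ideal.map_mul]
      exact Ideal.mul_le_left
    exact hle hrI₀
  · exact isPrincipal_map (π I) J
      (fun N hN => by
        haveI := hN
        exact Ideal.comap_isMaximal_of_surjective (π I) (π_surjective I)) hJloc
  · simpa using hLne
  · rintro H' hH'
    rw [List.mem_map] at hH'
    obtain ⟨H, hHL, rfl⟩ := hH'
    obtain ⟨hHtop, hHrad⟩ := hLmem H hHL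
    exact ⟨map_π_ne_top I (hKH H hHL) hHtop, map_π_isRadical I (hKH H hHL) hHrad⟩
  · rw [hmap, hprod, Ideal.map_mul, list_prod_map]

lemma part2 (hyp : ∀ a ∈ nonZeroDivisors A, I = Ideal.span {a} * I)
    (hA : IsISPRing A) : IsISPRing (AmalgDup I) := by
  intro Ihat hIhattop hIhatreg
  obtain ⟨x, hxIhat, hxreg⟩ := hIhatreg
  have hareg : (x : A × A).1 ∈ nonZeroDivisors A := fst_mem_nonZeroDivisors I hxreg
  have hbreg : (x : A × A).2 ∈ nonZeroDivisors A := snd_mem_nonZeroDivisors I hxreg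
  have hK : ∀ i (hi : i ∈ I), ofK I i hi ∈ Ihat := by
    intro i hi
    have hi' : i ∈ Ideal.span {(x : A × A).2} * I := by
      rw [← hyp _ hbreg]; exact hi
    obtain ⟨z, hz, hbz⟩ := Ideal.mem_span_singleton_mul.mp hi'
    have heq : ofK I i hi = x * ofK I z hz := by
      apply Subtype.ext
      show ((0 : A), i) = ((x : A × A).1 * 0, (x : A × A).2 * z)
      simp only [Prod.mk.injEq]
      exact ⟨by ring, hbz.symm⟩
    rw [heq]
    exact Ideal.mul_mem_right _ _ hxIhat
  set J := Ihat.map (π I) with hJdef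
  have hJtop : J ≠ ⊤ := map_π_ne_top I hK hIhattop
  have haJ : (x : A × A).1 ∈ J := Ideal.mem_map_of_mem _ hxIhat
  obtain ⟨J₀, L, ⟨hJ₀reg, hJ₀fg, hJ₀loc⟩, hLne, hLmem, hprod⟩ :=
    hA J hJtop ⟨(x : A × A).1, haJ, hareg⟩
  have haJ₀ : (x : A × A).1 ∈ J₀ := Ideal.mul_le_left (hprod ▸ haJ)
  have haH : ∀ H ∈ L, (x : A × A).1 ∈ H := fun H hH =>
    list_prod_le_of_mem hH (Ideal.mul_le_right (hprod ▸ haJ))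
  refine ⟨J₀.map (δ I), L.map (Ideal.comap (π I)), ⟨?_, hJ₀fg.map _, ?_⟩, ?_, ?_, ?_⟩
  · exact ⟨δ I ((x : A × A).1), Ideal.mem_map_of_mem _ haJ₀, δ_mem_nonZeroDivisors I hareg⟩
  · exact isPrincipal_map (δ I) J₀
      (fun N hN => by
        haveI := hN
        exact Ideal.isMaximal_comap_of_isIntegral_of_isMaximal' (δ I) (δ_isIntegral I) N)
      hJ₀loc
  · simpa using hLne
  · rintro H' hH'
    rw [List.mem_map] at hH'
    obtain ⟨H, hHL, rfl⟩ := hH'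
    obtain ⟨hHtop, hHrad⟩ := hLmem H hHL
    exact ⟨comap_π_ne_top I hHtop, comap_π_isRadical I hHrad⟩
  · apply le_antisymm
    · intro y hy
      rw [decomp I y]
      apply Ideal.add_mem
      · have h1 : (y : A × A).1 ∈ J := Ideal.mem_map_of_mem _ hy
        rw [hprod] at h1
        have h2 : δ I ((y : A × A).1) ∈ (J₀ * L.prod).map (δ I) :=
          Ideal.mem_map_of_mem _ h1
        rw [Ideal.map_mul, list_prod_map] at h2
        exact (Ideal.mul_mono_right (list_map_δ_prod_le I L)) h2
      · obtain ⟨j, hj, hij⟩ :=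
          pow_factor I _ (hyp _ hareg) (L.length + 1) _ (sub_mem_of_mem I y)
        rw [ofK_congr I (sub_mem_of_mem I y) (I.mul_mem_left _ hj) hij]
        exact pow_mul_mem I _ haJ₀ L haH j hj
    · intro y hy
      have h1 : (y : A × A).1 ∈ J := by
        have hle : J₀.map (δ I) * (L.map (Ideal.comap (π I))).prod ≤ (J₀ * L.prod).comap (π I) :=
          le_trans (Ideal.mul_mono (map_δ_le_comap_π I J₀) (list_prod_comap_le (π I) L))
            (comap_mul_le (π I) _ _)
        have := hle hy
        rw [← hprod] at this
        exact this
      exact mem_of_fst_mem_map I hK h1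

end AmalgDupISP

/-- (1) If `A ⋈ I` is an ISP-ring then so is `A`.  (2) If moreover `I = aI` for every
regular element `a` of `A`, then `A ⋈ I` is an ISP-ring iff `A` is an ISP-ring. -/
theorem amalgDup_isISPRing {A : Type*} [CommRing A] (I : Ideal A) :
    (IsISPRing (AmalgDup I) → IsISPRing A) ∧
      ((∀ a ∈ nonZeroDivisors A, I = Ideal.span {a} * I) →
        (IsISPRing (AmalgDup I) ↔ IsISPRing A)) := by
  refine ⟨AmalgDupISP.part1 I, fun hyp => ⟨AmalgDupISP.part1 I, AmalgDupISP.part2 I hyp⟩⟩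
end

section
/- Let A be a Marot ISP-ring in which every regular prime ideal is maximal, and let M be a regular maximal ideal of A. Then the regular localization A_(M) is a Prüfer ring (every finitely generated regular ideal of A_(M) is invertible), and the extended ideal M·A_(M) is invertible and not idempotent. -/
/-- A Marot ring: every regular ideal is generated by the regular elements it contains. -/
def IsMarotRing (A : Type*) [CommRing A] : Prop :=
  ∀ I : Ideal A, I.IsRegularIdeal →
    I = Ideal.span ((I : Set A) ∩ (nonZeroDivisors A : Set A))

/-- A Prüfer ring: every finitely generated regular ideal is invertible. -/
def IsPruferRing (A : Type*) [CommRing A] : Prop :=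
  ∀ J : Ideal A, J.FG → J.IsRegularIdeal → J.IsInvertibleIdeal



open Ideal

section LocHelpers

variable {R : Type*} [CommRing R] {B : Type*} [CommRing B] [Algebra R B]

/-- A regular element stays regular in any localization. -/
lemma loc_nzd (S : Submonoid R) [IsLocalization S B] {c : R} (hc : c ∈ nonZeroDivisors R) :
    algebraMap R B c ∈ nonZeroDivisors B := by
  rw [mem_nonZeroDivisors_iff_right]
  intro z hz
  obtain ⟨⟨x, s⟩, hxs⟩ := IsLocalization.mk'_surjective S z
  dsimp only at hxs
  subst hxs
  have h1 : algebraMap R B (x * c) = 0 := by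
    have := congrArg (fun t => algebraMap R B s * t) hz
    simp only [mul_zero] at this
    calc algebraMap R B (x * c)
        = (IsLocalization.mk' B x s * algebraMap R B s) * algebraMap R B c := by
          rw [IsLocalization.mk'_spec, _root_.map_mul]
      _ = algebraMap R B s * (IsLocalization.mk' B x s * algebraMap R B c) := by ring
      _ = 0 := this
  obtain ⟨m, hm⟩ := (IsLocalization.map_eq_zero_iff S B _).1 h1
  have hmx : (m : R) * x = 0 := by
    have : ((m : R) * x) * c = 0 := by rw [mul_assoc]; exact hm
    exact mem_nonZeroDivisors_iff_right.1 hc _ this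
  have hx0 : algebraMap R B x = 0 := by
    have := congrArg (algebraMap R B) hmx
    rw [_root_.map_mul, map_zero] at this
    exact ((IsLocalization.map_units B m).mul_right_eq_zero).1 this
  rw [IsLocalization.mk'_eq_mul_mk'_one, hx0, zero_mul]

/-- If the image of `x` is regular and `S` consists of regular elements, `x` is regular. -/
lemma nzd_of_loc (S : Submonoid R) [IsLocalization S B] (hS : S ≤ nonZeroDivisors R) {x : R}
    (hx : algebraMap R B x ∈ nonZeroDivisors B) : x ∈ nonZeroDivisors R := by
  rw [mem_nonZeroDivisors_iff_right]
  intro y hy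
  have h1 : algebraMap R B y = 0 := by
    apply mem_nonZeroDivisors_iff_right.1 hx
    rw [← _root_.map_mul, hy, map_zero]
  obtain ⟨m, hm⟩ := (IsLocalization.map_eq_zero_iff S B _).1 h1
  exact mem_nonZeroDivisors_iff_right.1 (hS m.2) _ (by rw [mul_comm]; exact hm)

/-- Saturation description of membership of `algebraMap` images in mapped ideals. -/
lemma loc_sat (S : Submonoid R) [IsLocalization S B] {I : Ideal R} {x : R} :
    algebraMap R B x ∈ I.map (algebraMap R B) ↔ ∃ s ∈ S, s * x ∈ I := by
  rw [← IsLocalization.mk'_one (M := S) B x, IsLocalization.mk'_mem_map_algebraMap_iff S B]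

lemma loc_map_eq_top (S : Submonoid R) [IsLocalization S B] {I : Ideal R}
    (h : ∃ y ∈ I, y ∈ S) : I.map (algebraMap R B) = ⊤ := by
  obtain ⟨y, hyI, hyS⟩ := h
  exact Ideal.eq_top_of_isUnit_mem _ (Ideal.mem_map_of_mem _ hyI)
    (IsLocalization.map_units B ⟨y, hyS⟩)

/-- The localization of a radical ideal is radical. -/
lemma loc_map_isRadical (S : Submonoid R) [IsLocalization S B] {H : Ideal R}
    (hrad : H.IsRadical) : (H.map (algebraMap R B)).IsRadical := by
  intro z hz
  obtain ⟨n, hn⟩ := Ideal.mem_radical_iff.1 hz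
  obtain ⟨⟨x, s⟩, hxs⟩ := IsLocalization.mk'_surjective S z
  dsimp only at hxs
  subst hxs
  rcases Nat.eq_zero_or_pos n with rfl | hnpos
  · simp only [pow_zero] at hn
    exact (Ideal.eq_top_iff_one _).2 hn ▸ trivial
  have hxn : algebraMap R B (x ^ n) ∈ H.map (algebraMap R B) := by
    have : algebraMap R B (x ^ n) =
        (IsLocalization.mk' B x s) ^ n * algebraMap R B ((s : R) ^ n) := by
      rw [map_pow, map_pow, ← mul_pow, IsLocalization.mk'_spec]
    rw [this]
    exact Ideal.mul_mem_right _ _ hn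
  obtain ⟨t, htS, ht⟩ := (loc_sat S).1 hxn
  have htx : t * x ∈ H := by
    apply hrad
    refine ⟨n, ?_⟩
    have : (t * x) ^ n = t ^ (n - 1) * (t * x ^ n) := by
      rw [mul_pow]
      rw [show t ^ n = t ^ (n-1) * t by rw [← pow_succ]; congr 1; omega]
      ring
    rw [this]
    exact H.mul_mem_left _ ht
  have hxmem : algebraMap R B x ∈ H.map (algebraMap R B) := by
    have h2 : algebraMap R B (t * x) ∈ H.map (algebraMap R B) := Ideal.mem_map_of_mem _ htx
    rw [_root_.map_mul] at h2
    exact (Ideal.unit_mul_mem_iff_mem _ (IsLocalization.map_units B ⟨t, htS⟩)).1 h2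
  rw [IsLocalization.mk'_eq_mul_mk'_one]
  exact Ideal.mul_mem_right _ _ hxmem

end LocHelpers

/-- Elementary invertibility : `K·K' = (c)` for some regular `c`. -/
def EInvI {R : Type*} [CommRing R] (K : Ideal R) : Prop :=
  ∃ (K' : Ideal R) (c : R), c ∈ nonZeroDivisors R ∧ K * K' = Ideal.span {c}

section EInv

variable {R : Type*} [CommRing R]

lemma einv_top : EInvI (⊤ : Ideal R) :=
  ⟨⊤, 1, Submonoid.one_mem _, by rw [Ideal.top_mul, Ideal.span_singleton_one]⟩

lemma einv_mul {K₁ K₂ : Ideal R} (h1 : EInvI K₁) (h2 : EInvI K₂) : EInvI (K₁ * K₂) := by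
  obtain ⟨K₁', c₁, hc₁, h1⟩ := h1
  obtain ⟨K₂', c₂, hc₂, h2⟩ := h2
  refine ⟨K₁' * K₂', c₁ * c₂, mul_mem hc₁ hc₂, ?_⟩
  rw [show K₁ * K₂ * (K₁' * K₂') = (K₁ * K₁') * (K₂ * K₂') by ring, h1, h2,
    Ideal.span_singleton_mul_span_singleton]

lemma einv_pow {K : Ideal R} (h : EInvI K) (k : ℕ) : EInvI (K ^ k) := by
  induction k with
  | zero => simpa [pow_zero, Ideal.one_eq_top] using einv_top
  | succ n ih => rw [pow_succ]; exact einv_mul ih h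

lemma einv_cancel {X U V : Ideal R} (hX : EInvI X) (h : X * U = X * V) : U = V := by
  obtain ⟨X', c, hc, hXX⟩ := hX
  have h2 : Ideal.span {c} * U = Ideal.span {c} * V := by
    calc Ideal.span {c} * U = X * X' * U := by rw [hXX]
      _ = X' * (X * U) := by ring
      _ = X' * (X * V) := by rw [h]
      _ = X * X' * V := by ring
      _ = Ideal.span {c} * V := by rw [hXX]
  have key : ∀ U V : Ideal R, Ideal.span {c} * U = Ideal.span {c} * V → U ≤ V := by
    intro U V hUV x hx
    have hcx : c * x ∈ Ideal.span {c} * V := by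
      rw [← hUV]
      exact Ideal.mul_mem_mul (Ideal.mem_span_singleton_self c) hx
    obtain ⟨v, hv, hveq⟩ := Ideal.mem_span_singleton_mul.1 hcx
    have hxv : (x - v) * c = 0 := by linear_combination -hveq
    have hx0 : x - v = 0 := mem_nonZeroDivisors_iff_right.1 hc _ hxv
    have hxe : x = v := sub_eq_zero.mp hx0
    exact hxe ▸ hv
  exact le_antisymm (key U V h2) (key V U h2.symm)

end EInv

section Conv

variable {R : Type*} [CommRing R]

lemma msum_mem {I : Ideal R} : ∀ (s : Multiset R), (∀ x ∈ s, x ∈ I) → s.sum ∈ I := by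
  intro s
  induction s using Multiset.induction with
  | empty => intro _; simp
  | cons a t ih =>
      intro h
      rw [Multiset.sum_cons]
      exact Ideal.add_mem _ (h a (Multiset.mem_cons_self a t))
        (ih fun x hx => h x (Multiset.mem_cons_of_mem hx))

/-- Elementary invertibility implies invertibility (fg + locally principal). -/
lemma einv_isInvertible {K : Ideal R} (h : EInvI K) : K.IsInvertibleIdeal := by
  classical
  obtain ⟨K', c, hc, hKK⟩ := h
  have h1 : c ∈ K * K' := by rw [hKK]; exact Ideal.mem_span_singleton_self c
  have hcK : c ∈ K := Ideal.mul_le_left h1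
  -- a representation of c as a finite sum of products
  have hrep : ∃ s : Multiset (R × R), (∀ p ∈ s, p.1 ∈ K ∧ p.2 ∈ K') ∧
      (s.map fun p => p.1 * p.2).sum = c := by
    refine Submodule.mul_induction_on h1 ?_ ?_
    · intro m hm n hn
      refine ⟨{(m, n)}, ?_, by simp⟩
      intro p hp
      rw [Multiset.mem_singleton] at hp
      subst hp
      exact ⟨hm, hn⟩
    · rintro x y ⟨s, hs, rfl⟩ ⟨t, ht, rfl⟩
      exact ⟨s + t, fun p hp => (Multiset.mem_add.1 hp).elim (hs p) (ht p), by
        rw [Multiset.map_add, Multiset.sum_add]⟩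
  obtain ⟨s, hs, hsum⟩ := hrep
  -- the coefficients E p with E p * c = p.1 * p.2
  set E : R × R → R := fun p => if h : ∃ a, a * c = p.1 * p.2 then h.choose else 0 with hEdef
  have hE : ∀ p ∈ s, E p * c = p.1 * p.2 := by
    intro p hp
    have hmem : p.1 * p.2 ∈ Ideal.span {c} := by
      rw [← hKK]; exact Ideal.mul_mem_mul (hs p hp).1 (hs p hp).2
    have hex : ∃ a, a * c = p.1 * p.2 := Ideal.mem_span_singleton'.1 hmem
    rw [hEdef]; simp only [dif_pos hex]; exact hex.choose_spec
  have hE1 : (s.map E).sum = 1 := by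
    have h2 : ((s.map E).sum - 1) * c = 0 := by
      have h3 : (s.map E).sum * c = (s.map fun p => E p * c).sum := by
        rw [← Multiset.sum_map_mul_right]
      have h4 : (s.map fun p => E p * c).sum = (s.map fun p => p.1 * p.2).sum :=
        congrArg Multiset.sum (Multiset.map_congr rfl hE)
      have : (s.map E).sum * c = c := by rw [h3, h4, hsum]
      linear_combination this
    exact sub_eq_zero.mp (mem_nonZeroDivisors_iff_right.1 hc _ h2)
  -- finite generation
  have hFspan : Ideal.span (↑((s.map Prod.fst).toFinset) : Set R) = K := by
    apply le_antisymm
    · rw [Ideal.span_le]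
      intro g hg
      rw [Finset.mem_coe, Multiset.mem_toFinset, Multiset.mem_map] at hg
      obtain ⟨p, hp, rfl⟩ := hg
      exact (hs p hp).1
    · intro x hx
      -- coefficients for x : T p * c = x * p.2
      have hT : ∀ p ∈ s, ∃ t, t * c = x * p.2 := by
        intro p hp
        have : x * p.2 ∈ Ideal.span {c} := by
          rw [← hKK]; exact Ideal.mul_mem_mul hx (hs p hp).2
        exact Ideal.mem_span_singleton'.1 this
      set T : R × R → R := fun p => if h : ∃ t, t * c = x * p.2 then h.choose else 0 with hTdef
      have hTp : ∀ p ∈ s, T p * c = x * p.2 := by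
        intro p hp
        have hex := hT p hp
        rw [hTdef]; simp only [dif_pos hex]; exact hex.choose_spec
      have hxc : (x - (s.map fun p => p.1 * T p).sum) * c = 0 := by
        have e1 : x * c = (s.map fun p => x * (p.1 * p.2)).sum := by
          rw [Multiset.sum_map_mul_left, hsum]
        have e2 : (s.map fun p => x * (p.1 * p.2)).sum
            = (s.map fun p => (p.1 * T p) * c).sum := by
          apply congrArg Multiset.sum
          apply Multiset.map_congr rfl
          intro p hp
          have := hTp p hp
          calc x * (p.1 * p.2) = p.1 * (x * p.2) := by ring
            _ = p.1 * (T p * c) := by rw [this]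
            _ = (p.1 * T p) * c := by ring
        have e3 : (s.map fun p => (p.1 * T p) * c).sum
            = (s.map fun p => p.1 * T p).sum * c := by
          rw [← Multiset.sum_map_mul_right]
        have : x * c = (s.map fun p => p.1 * T p).sum * c := by rw [e1, e2, e3]
        linear_combination this
      have hxeq : x = (s.map fun p => p.1 * T p).sum := sub_eq_zero.mp (mem_nonZeroDivisors_iff_right.1 hc _ hxc)
      rw [hxeq]
      apply msum_mem
      intro y hy
      rw [Multiset.mem_map] at hy
      obtain ⟨p, hp, rfl⟩ := hy
      apply Ideal.mul_mem_right
      apply Ideal.subset_span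
      rw [Finset.mem_coe, Multiset.mem_toFinset, Multiset.mem_map]
      exact ⟨p, hp, rfl⟩
  refine ⟨⟨c, hcK, hc⟩, ⟨_, hFspan⟩, ?_⟩
  -- locally principal
  intro N hN
  haveI := hN.isPrime
  set φ := algebraMap R (Localization.AtPrime N) with hφ
  have hp0 : ∃ p₀ ∈ s, E p₀ ∉ N := by
    by_contra hall
    push_neg at hall
    have : (1 : R) ∈ N := by
      rw [← hE1]
      apply msum_mem
      intro y hy
      rw [Multiset.mem_map] at hy
      obtain ⟨p, hp, rfl⟩ := hy
      exact hall p hp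
    exact hN.ne_top ((Ideal.eq_top_iff_one _).2 this)
  obtain ⟨p₀, hp₀s, hp₀⟩ := hp0
  have hunit : IsUnit (φ (E p₀)) := IsLocalization.map_units _ (⟨E p₀, show E p₀ ∈ N.primeCompl from hp₀⟩ : N.primeCompl)
  have hKmap : K.map φ = Ideal.span {φ p₀.1} := by
    apply le_antisymm
    · rw [Ideal.map_le_iff_le_comap]
      intro x hx
      have hx2 : x * p₀.2 ∈ Ideal.span {c} := by
        rw [← hKK]; exact Ideal.mul_mem_mul hx (hs p₀ hp₀s).2
      obtain ⟨t, ht⟩ := Ideal.mem_span_singleton'.1 hx2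
      have key : x * E p₀ = p₀.1 * t := by
        have h5 : (x * E p₀ - p₀.1 * t) * c = 0 := by
          have := hE p₀ hp₀s
          calc (x * E p₀ - p₀.1 * t) * c = x * (E p₀ * c) - p₀.1 * (t * c) := by ring
            _ = x * (p₀.1 * p₀.2) - p₀.1 * (x * p₀.2) := by rw [this, ht]
            _ = 0 := by ring
        exact sub_eq_zero.mp (mem_nonZeroDivisors_iff_right.1 hc _ h5)
      obtain ⟨u, hu⟩ := hunit
      rw [Ideal.mem_comap, Ideal.mem_span_singleton']
      refine ⟨φ t * ↑u⁻¹, ?_⟩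
      have h6 : φ x * ↑u = φ (p₀.1) * φ t := by
        rw [hu, ← _root_.map_mul, key, _root_.map_mul]
      calc φ t * ↑u⁻¹ * φ p₀.1 = (φ p₀.1 * φ t) * ↑u⁻¹ := by ring
        _ = (φ x * ↑u) * ↑u⁻¹ := by rw [h6]
        _ = φ x := by rw [mul_assoc, Units.mul_inv, mul_one]
    · rw [Ideal.span_le, Set.singleton_subset_iff]
      exact Ideal.mem_map_of_mem _ (hs p₀ hp₀s).1
  exact ⟨⟨φ p₀.1, hKmap⟩⟩

end Conv

lemma einv_map {R : Type*} [CommRing R] {B : Type*} [CommRing B] [Algebra R B]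
    (S : Submonoid R) [IsLocalization S B] {K : Ideal R} (h : EInvI K) :
    EInvI (K.map (algebraMap R B)) := by
  obtain ⟨K', c, hc, hKK⟩ := h
  exact ⟨K'.map (algebraMap R B), algebraMap R B c, loc_nzd S hc, by
    rw [← Ideal.map_mul, hKK, Ideal.map_span, Set.image_singleton]⟩

section Conv2

variable {R : Type*} [CommRing R]

/-- Invertibility (fg + locally principal) implies elementary invertibility. -/
lemma isInvertible_einv {K : Ideal R} (h : K.IsInvertibleIdeal) : EInvI K := by
  classical
  obtain ⟨⟨c₀, hc₀K, hc₀⟩, hFG, hloc⟩ := h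
  set Jc : Ideal R := (Ideal.span {c₀}).colon K with hJc
  refine ⟨Jc, c₀, hc₀, le_antisymm ?_ ?_⟩
  · apply Ideal.mul_le.2
    intro a ha b hb
    have := Submodule.mem_colon.1 hb a ha
    rw [smul_eq_mul] at this
    rw [mul_comm]
    exact this
  · rw [Ideal.span_le, Set.singleton_subset_iff]
    by_contra hco
    set T : Ideal R := (K * Jc).colon (Ideal.span {c₀}) with hT
    have hTne : T ≠ ⊤ := by
      intro htop
      apply hco
      have h1 : (1 : R) ∈ T := htop ▸ Submodule.mem_top
      have := Submodule.mem_colon.1 h1 c₀ (Ideal.mem_span_singleton_self c₀)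
      rwa [smul_eq_mul, one_mul] at this
    obtain ⟨N, hNmax, hTN⟩ := Ideal.exists_le_maximal T hTne
    haveI := hNmax.isPrime
    set φ := algebraMap R (Localization.AtPrime N) with hφ
    obtain ⟨d, hd0⟩ := (hloc N hNmax).principal
    have hd : K.map (algebraMap R (Localization.AtPrime N)) = Ideal.span {d} := hd0
    -- c₀ ∈ K gives w with w * d = φ c₀
    have hc₀mem : φ c₀ ∈ Ideal.span {d} := by
      rw [← hd]; exact Ideal.mem_map_of_mem _ hc₀K
    obtain ⟨w, hw⟩ := Ideal.mem_span_singleton'.1 hc₀mem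
    obtain ⟨⟨p, q⟩, hpq⟩ := IsLocalization.mk'_surjective N.primeCompl w
    dsimp only at hpq
    obtain ⟨G, hG⟩ := hFG
    -- for each generator g, find t_g ∉ N with t_g * (p * g) ∈ (c₀)
    have hgen : ∀ g ∈ G, ∃ t, t ∈ N.primeCompl ∧ t * (p * g) ∈ Ideal.span {c₀} := by
      intro g hgG
      have hgK : g ∈ K := by rw [← hG]; exact Ideal.subset_span hgG
      have hgmem : φ g ∈ Ideal.span {d} := by rw [← hd]; exact Ideal.mem_map_of_mem _ hgK
      obtain ⟨v, hv⟩ := Ideal.mem_span_singleton'.1 hgmem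
      -- φ (p*g) = φ q * v * φ c₀
      have hkey : φ (p * g) = (φ q * v) * φ c₀ := by
        have h2 : w * φ q = φ p := by rw [← hpq]; exact IsLocalization.mk'_spec _ p q
        calc φ (p * g) = φ p * φ g := by rw [_root_.map_mul]
          _ = (w * φ q) * (v * d) := by rw [h2, hv]
          _ = (φ q * v) * (w * d) := by ring
          _ = (φ q * v) * φ c₀ := by rw [hw]
      have hmem2 : φ (p * g) ∈ (Ideal.span {c₀}).map φ := by
        rw [Ideal.map_span, Set.image_singleton, hkey]
        exact Ideal.mul_mem_left _ _ (Ideal.mem_span_singleton_self _)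
      obtain ⟨t, htS, ht⟩ := (loc_sat N.primeCompl).1 hmem2
      exact ⟨t, htS, ht⟩
    -- τ : product of all the t_g
    set tf : R → R := fun g => if hg : ∃ t, t ∈ N.primeCompl ∧ t * (p * g) ∈ Ideal.span {c₀}
      then hg.choose else 1 with htf
    have htf1 : ∀ g ∈ G, tf g ∈ N.primeCompl ∧ tf g * (p * g) ∈ Ideal.span {c₀} := by
      intro g hg
      have hex := hgen g hg
      rw [htf]; simp only [dif_pos hex]; exact hex.choose_spec
    set τ : R := ∏ g ∈ G, tf g with hτ
    have hτS : τ ∈ N.primeCompl := by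
      rw [hτ]
      exact Submonoid.prod_mem _ fun g hg => (htf1 g hg).1
    have hτg : ∀ g ∈ G, (τ * p) * g ∈ Ideal.span {c₀} := by
      intro g hg
      obtain ⟨u, hu⟩ := Finset.dvd_prod_of_mem tf hg
      have : (τ * p) * g = u * (tf g * (p * g)) := by rw [hτ, hu]; ring
      rw [this]
      exact Ideal.mul_mem_left _ _ (htf1 g hg).2
    have hτp : τ * p ∈ Jc := by
      have hKle : K ≤ (Ideal.span {c₀}).colon (Ideal.span {τ * p}) := by
        rw [← hG, Ideal.span_le]
        intro g hg
        rw [SetLike.mem_coe, Submodule.mem_colon]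
        intro y hy
        obtain ⟨r, hr⟩ := Ideal.mem_span_singleton'.1 hy
        rw [smul_eq_mul, ← hr]
        have : g * (r * (τ * p)) = r * ((τ * p) * g) := by ring
        rw [this]
        exact Ideal.mul_mem_left _ _ (hτg g hg)
      rw [hJc, Submodule.mem_colon]
      intro x hx
      rw [smul_eq_mul, mul_comm]
      have := Submodule.mem_colon.1 (hKle hx) (τ * p) (Ideal.mem_span_singleton_self _)
      rwa [smul_eq_mul] at this
    -- now show φ c₀ ∈ (K * Jc).map φ
    have hwmem : w ∈ Jc.map φ := by
      have h7 : w * φ (τ * q) = φ (τ * p) := by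
        have h8 : w * φ (q : R) = φ p := by rw [← hpq]; exact IsLocalization.mk'_spec _ p q
        calc w * φ (τ * q) = (w * φ (q:R)) * φ τ := by rw [_root_.map_mul]; ring
          _ = φ p * φ τ := by rw [h8]
          _ = φ (τ * p) := by rw [_root_.map_mul]; ring
      have hτq : (τ * (q:R)) ∈ N.primeCompl := Submonoid.mul_mem _ hτS q.2
      obtain ⟨u, hu⟩ := IsLocalization.map_units (Localization.AtPrime N)
        (⟨τ * (q:R), hτq⟩ : N.primeCompl)
      have : w = φ (τ * p) * ↑u⁻¹ := by
        rw [Units.eq_mul_inv_iff_mul_eq, hu]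
        exact h7
      rw [this]
      exact Ideal.mul_mem_right _ _ (Ideal.mem_map_of_mem _ hτp)
    have hc₀mem2 : φ c₀ ∈ (K * Jc).map φ := by
      rw [Ideal.map_mul, hd, ← hw, mul_comm w d]
      exact Ideal.mul_mem_mul (Ideal.mem_span_singleton_self d) hwmem
    obtain ⟨t, htS, ht⟩ := (loc_sat N.primeCompl).1 hc₀mem2
    have htT : t ∈ T := by
      rw [hT, Submodule.mem_colon]
      intro y hy
      obtain ⟨r, hr⟩ := Ideal.mem_span_singleton'.1 hy
      rw [smul_eq_mul, ← hr]
      have : t * (r * c₀) = r * (t * c₀) := by ring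
      rw [this]
      exact Ideal.mul_mem_left _ _ ht
    exact htS (hTN htT)

end Conv2

section ListHelpers

variable {R : Type*} [CommRing R]

lemma list_prod_le_of_mem {L : List (Ideal R)} {H : Ideal R} (h : H ∈ L) : L.prod ≤ H := by
  induction L with
  | nil => exact absurd h List.not_mem_nil
  | cons K t ih =>
      rw [List.prod_cons]
      rcases List.mem_cons.1 h with rfl | ht
      · exact Ideal.mul_le_left
      · exact le_trans Ideal.mul_le_right (ih ht)

lemma list_prod_le_prime {L : List (Ideal R)} {P : Ideal R} (hP : P.IsPrime)
    (h : L.prod ≤ P) : ∃ H ∈ L, H ≤ P := by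
  induction L with
  | nil =>
      rw [List.prod_nil] at h
      exact absurd ((Ideal.eq_top_iff_one _).2 (h (by rw [Ideal.one_eq_top]; trivial)))
        hP.ne_top
  | cons K t ih =>
      rw [List.prod_cons] at h
      rcases (hP.mul_le).1 h with hK | ht
      · exact ⟨K, List.mem_cons_self, hK⟩
      · obtain ⟨H, hH, hle⟩ := ih ht
        exact ⟨H, List.mem_cons_of_mem _ hH, hle⟩

lemma list_map_prod {B : Type*} [CommRing B] (f : R →+* B) (L : List (Ideal R)) :
    (L.map (Ideal.map f)).prod = L.prod.map f := by
  induction L with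
  | nil => simp only [List.map_nil, List.prod_nil, Ideal.one_eq_top, Ideal.map_top]
  | cons K t ih => rw [List.map_cons, List.prod_cons, List.prod_cons, Ideal.map_mul, ih]

lemma list_pow_form {L : List (Ideal R)} {Q : Ideal R} (h : ∀ X ∈ L, X = ⊤ ∨ X = Q) :
    ∃ k : ℕ, L.prod = Q ^ k := by
  induction L with
  | nil => exact ⟨0, by rw [List.prod_nil, pow_zero]⟩
  | cons K t ih =>
      obtain ⟨k, hk⟩ := ih fun X hX => h X (List.mem_cons_of_mem _ hX)
      rcases h K List.mem_cons_self with rfl | rfl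
      · exact ⟨k, by rw [List.prod_cons, hk, Ideal.top_mul]⟩
      · exact ⟨k + 1, by rw [List.prod_cons, hk, pow_succ, mul_comm]⟩

end ListHelpers

section MLemmas

variable {A : Type*} [CommRing A] {B : Type*} [CommRing B] [Algebra A B]

lemma lem_MB_proper (S : Submonoid A) [IsLocalization S B] (M : Ideal A)
    (hSmem : ∀ x : A, x ∈ S ↔ x ∈ nonZeroDivisors A ∧ x ∉ M) : M.map (algebraMap A B) ≠ ⊤ := by
  intro h
  have h1 : algebraMap A B 1 ∈ M.map (algebraMap A B) := by rw [h]; trivial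
  obtain ⟨s, hsS, hs⟩ := (loc_sat S).1 h1
  rw [mul_one] at hs
  exact ((hSmem s).1 hsS).2 hs

/-- Any prime of `B` containing a regular contracted element is `M·B`. -/
lemma lem_prime_eq (S : Submonoid A) [IsLocalization S B] (M : Ideal A)
    (hSmem : ∀ x : A, x ∈ S ↔ x ∈ nonZeroDivisors A ∧ x ∉ M)
    (hmarot : IsMarotRing A)
    (hdim : ∀ P : Ideal A, P.IsPrime → P.IsRegularIdeal → P.IsMaximal)
    (hM : M.IsMaximal) (P : Ideal B) (hP : P.IsPrime)
    (hx : ∃ h ∈ P.comap (algebraMap A B), h ∈ nonZeroDivisors A) :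
    P = M.map (algebraMap A B) := by
  set Q : Ideal A := P.comap (algebraMap A B) with hQ
  haveI hQp : Q.IsPrime := Ideal.IsPrime.comap _
  have hQreg : Q.IsRegularIdeal := hx
  have hQmax : Q.IsMaximal := hdim Q hQp hQreg
  have hQM : Q ≤ M := by
    have hspan := hmarot Q hQreg
    rw [hspan]
    apply Ideal.span_le.2
    rintro q ⟨hqQ, hqnzd⟩
    by_contra hqM
    have hqS : q ∈ S := (hSmem q).2 ⟨hqnzd, hqM⟩
    have : IsUnit (algebraMap A B q) := IsLocalization.map_units B (⟨q, hqS⟩ : S)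
    exact hP.ne_top (Ideal.eq_top_of_isUnit_mem _ hqQ this)
  have hQeqM : Q = M := hQmax.eq_of_le hM.ne_top hQM
  rw [← IsLocalization.map_comap S B P, Ideal.under_def, ← hQ, hQeqM]

/-- A regular radical ideal inside `M` extends to `M·B`. -/
lemma lem_radical_map (S : Submonoid A) [IsLocalization S B] (M : Ideal A)
    (hSmem : ∀ x : A, x ∈ S ↔ x ∈ nonZeroDivisors A ∧ x ∉ M)
    (hmarot : IsMarotRing A)
    (hdim : ∀ P : Ideal A, P.IsPrime → P.IsRegularIdeal → P.IsMaximal)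
    (hM : M.IsMaximal) (H : Ideal A) (hreg : H.IsRegularIdeal) (hrad : H.IsRadical)
    (hle : H ≤ M) : H.map (algebraMap A B) = M.map (algebraMap A B) := by
  have hproper : H.map (algebraMap A B) ≠ ⊤ := by
    intro h
    exact lem_MB_proper S M hSmem (top_le_iff.1 (h ▸ Ideal.map_mono hle))
  have hradB : (H.map (algebraMap A B)).IsRadical := loc_map_isRadical S hrad
  have hradeq : (H.map (algebraMap A B)).radical = M.map (algebraMap A B) := by
    rw [Ideal.radical_eq_sInf]
    apply le_antisymm
    · apply sInf_le
      constructor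
      · exact Ideal.map_mono hle
      · apply IsLocalization.isPrime_of_isPrime_disjoint S B M hM.isPrime
        rw [Set.disjoint_left]
        intro x hxS hxM
        exact ((hSmem x).1 hxS).2 hxM
    · apply le_sInf
      rintro P ⟨hHP, hPprime⟩
      obtain ⟨h0, h0H, h0nzd⟩ := hreg
      have : P = M.map (algebraMap A B) := by
        apply lem_prime_eq S M hSmem hmarot hdim hM P hPprime
        exact ⟨h0, Ideal.mem_comap.2 (hHP (Ideal.mem_map_of_mem _ h0H)), h0nzd⟩
      rw [this]
  rw [← hradeq]
  exact le_antisymm Ideal.le_radical hradB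

/-- A regular ideal not inside `M` extends to the unit ideal. -/
lemma lem_top_map (S : Submonoid A) [IsLocalization S B] (M : Ideal A)
    (hSmem : ∀ x : A, x ∈ S ↔ x ∈ nonZeroDivisors A ∧ x ∉ M)
    (hmarot : IsMarotRing A) (H : Ideal A) (hreg : H.IsRegularIdeal) (hnle : ¬ H ≤ M) :
    H.map (algebraMap A B) = ⊤ := by
  apply loc_map_eq_top S
  have hspan := hmarot H hreg
  by_contra hne
  push_neg at hne
  apply hnle
  rw [hspan]
  apply Ideal.span_le.2
  rintro y ⟨hyH, hynzd⟩
  by_contra hyM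
  exact (hne y hyH) ((hSmem y).2 ⟨hynzd, hyM⟩)

end MLemmas

section MainArg

variable {A : Type*} [CommRing A] {B : Type*} [CommRing B] [Algebra A B]

/-- The key step: given a suitable ideal `I`, produce a strictly bigger member of the family,
assuming `M·B` is not elementarily invertible. -/
lemma lem_step (S : Submonoid A) [IsLocalization S B] (M : Ideal A)
    (hSmem : ∀ x : A, x ∈ S ↔ x ∈ nonZeroDivisors A ∧ x ∉ M)
    (hmarot : IsMarotRing A) (hisp : IsISPRing A)
    (hdim : ∀ P : Ideal A, P.IsPrime → P.IsRegularIdeal → P.IsMaximal)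
    (hM : M.IsMaximal) {a : A} (ha : a ∈ nonZeroDivisors A)
    (hcon : ¬ EInvI (M.map (algebraMap A B)))
    (I : Ideal A) (hIM : I ≤ M) (hIreg : I.IsRegularIdeal)
    (hImap : I.map (algebraMap A B) = Ideal.span {algebraMap A B a}) :
    ∃ J₂ : Ideal A, (J₂ ≤ M ∧ J₂.IsRegularIdeal ∧ EInvI J₂ ∧
      J₂.map (algebraMap A B) = Ideal.span {algebraMap A B a}) ∧ I ≤ J₂ ∧ I ≠ J₂ := by
  classical
  have hInet : I ≠ ⊤ := fun h => hM.ne_top (top_le_iff.1 (h ▸ hIM))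
  obtain ⟨J, L, hJinv, hLne, hLprop, hIeq⟩ := hisp I hInet hIreg
  obtain ⟨r, hrI, hrnzd⟩ := hIreg
  have hHreg : ∀ H ∈ L, H.IsRegularIdeal := fun H hH =>
    ⟨r, (list_prod_le_of_mem hH) (Ideal.mul_le_right (hIeq ▸ hrI)), hrnzd⟩
  by_cases hex : ∃ H ∈ L, H ≤ M
  · exfalso
    apply hcon
    obtain ⟨H, hHL, hHM⟩ := hex
    have hHmap : H.map (algebraMap A B) = M.map (algebraMap A B) :=
      lem_radical_map S M hSmem hmarot hdim hM H (hHreg H hHL) (hLprop H hHL).2 hHM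
    have hX : (Ideal.map (algebraMap A B) H) ∈ L.map (Ideal.map (algebraMap A B)) :=
      List.mem_map_of_mem hHL
    have herase := List.prod_erase hX
    have hImap2 : Ideal.span {algebraMap A B a} =
        (M.map (algebraMap A B)) * ((J.map (algebraMap A B)) *
          ((L.map (Ideal.map (algebraMap A B))).erase
            (H.map (algebraMap A B))).prod) := by
      rw [← hImap, hIeq, Ideal.map_mul, ← list_map_prod, ← herase, hHmap]
      ring
    exact ⟨_, _, loc_nzd S ha, hImap2.symm⟩
  · push_neg at hex
    have hmaptop : ∀ H ∈ L, H.map (algebraMap A B) = ⊤ := fun H hH =>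
      lem_top_map S M hSmem hmarot H (hHreg H hH) (hex H hH)
    have hLprod_top : (L.map (Ideal.map (algebraMap A B))).prod = ⊤ := by
      rw [← Ideal.one_eq_top]
      apply List.prod_eq_one
      intro X hX
      rw [List.mem_map] at hX
      obtain ⟨H, hH, rfl⟩ := hX
      rw [Ideal.one_eq_top]; exact hmaptop H hH
    have hJmap : J.map (algebraMap A B) = Ideal.span {algebraMap A B a} := by
      rw [← hImap, hIeq, Ideal.map_mul, ← list_map_prod, hLprod_top, Ideal.mul_top]
    have hJM : J ≤ M := by
      have h1 : J * L.prod ≤ M := hIeq ▸ hIM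
      rcases hM.isPrime.mul_le.1 h1 with h | h
      · exact h
      · obtain ⟨H, hH, hle⟩ := list_prod_le_prime hM.isPrime h
        exact absurd hle (hex H hH)
    have hJreg : J.IsRegularIdeal := ⟨r, Ideal.mul_le_left (hIeq ▸ hrI), hrnzd⟩
    have hJein : EInvI J := isInvertible_einv hJinv
    refine ⟨J, ⟨hJM, hJreg, hJein, hJmap⟩, hIeq ▸ Ideal.mul_le_left, ?_⟩
    intro hIJ
    have h2 : J * ⊤ = J * L.prod := by
      rw [Ideal.mul_top]
      rw [hIJ] at hIeq
      exact hIeq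
    have h3 : (⊤ : Ideal A) = L.prod := einv_cancel hJein h2
    obtain ⟨H, hH⟩ := List.exists_mem_of_ne_nil L hLne
    exact (hLprop H hH).1 (top_le_iff.1 (h3 ▸ list_prod_le_of_mem hH))

/-- The extension of `M` to the regular localization is elementarily invertible. -/
lemma lem_MB_einv (S : Submonoid A) [IsLocalization S B] (M : Ideal A)
    (hSmem : ∀ x : A, x ∈ S ↔ x ∈ nonZeroDivisors A ∧ x ∉ M)
    (hmarot : IsMarotRing A) (hisp : IsISPRing A)
    (hdim : ∀ P : Ideal A, P.IsPrime → P.IsRegularIdeal → P.IsMaximal)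
    (hM : M.IsMaximal) (hMreg : M.IsRegularIdeal) :
    EInvI (M.map (algebraMap A B)) := by
  by_contra hcon
  obtain ⟨a, haM, ha⟩ := hMreg
  set 𝒥 : Set (Ideal A) := {J | J ≤ M ∧ J.IsRegularIdeal ∧ EInvI J ∧
    J.map (algebraMap A B) = Ideal.span {algebraMap A B a}} with h𝒥
  have hstart : Ideal.span {a} ∈ 𝒥 := by
    refine ⟨Ideal.span_le.2 (Set.singleton_subset_iff.2 haM),
      ⟨a, Ideal.mem_span_singleton_self a, ha⟩,
      ⟨⊤, a, ha, by rw [Ideal.mul_top]⟩,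
      by rw [Ideal.map_span, Set.image_singleton]⟩
  have hchain : ∀ c ⊆ 𝒥, IsChain (· ≤ ·) c → ∀ y ∈ c, ∃ ub ∈ 𝒥, ∀ z ∈ c, z ≤ ub := by
    intro c hc _ y hy
    have hUM : sSup c ≤ M := sSup_le fun J hJ => (hc hJ).1
    have hUreg : (sSup c).IsRegularIdeal := by
      obtain ⟨r, hr, hrn⟩ := (hc hy).2.1
      exact ⟨r, (le_sSup hy) hr, hrn⟩
    have hUmap : (sSup c).map (algebraMap A B) = Ideal.span {algebraMap A B a} := by
      apply le_antisymm
      · rw [Ideal.map_le_iff_le_comap]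
        apply sSup_le
        intro J hJ
        rw [← Ideal.map_le_iff_le_comap, (hc hJ).2.2.2]
      · rw [← (hc hy).2.2.2]
        exact Ideal.map_mono (le_sSup hy)
    obtain ⟨J₂, hJ₂, hUJ₂, _⟩ :=
      lem_step S M hSmem hmarot hisp hdim hM ha hcon (sSup c) hUM hUreg hUmap
    exact ⟨J₂, hJ₂, fun z hz => le_trans (le_sSup hz) hUJ₂⟩
  obtain ⟨m, -, hmax⟩ := zorn_le_nonempty₀ 𝒥 hchain (Ideal.span {a}) hstart
  obtain ⟨hmM, hmreg, -, hmmap⟩ := hmax.1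
  obtain ⟨J₂, hJ₂mem, hmJ₂, hneq⟩ :=
    lem_step S M hSmem hmarot hisp hdim hM ha hcon m hmM hmreg hmmap
  exact hneq (le_antisymm hmJ₂ (hmax.2 hJ₂mem hmJ₂))

/-- Main general statement. -/
lemma main_general (S : Submonoid A) [IsLocalization S B] (M : Ideal A)
    (hSmem : ∀ x : A, x ∈ S ↔ x ∈ nonZeroDivisors A ∧ x ∉ M)
    (hmarot : IsMarotRing A) (hisp : IsISPRing A)
    (hdim : ∀ P : Ideal A, P.IsPrime → P.IsRegularIdeal → P.IsMaximal)
    (hM : M.IsMaximal) (hMreg : M.IsRegularIdeal) :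
    IsPruferRing B ∧ (M.map (algebraMap A B)).IsInvertibleIdeal ∧
      (M.map (algebraMap A B)) * (M.map (algebraMap A B)) ≠ M.map (algebraMap A B) := by
  have hS1 : S ≤ nonZeroDivisors A := fun x hx => ((hSmem x).1 hx).1
  have hEM : EInvI (M.map (algebraMap A B)) :=
    lem_MB_einv S M hSmem hmarot hisp hdim hM hMreg
  refine ⟨?_, einv_isInvertible hEM, ?_⟩
  · -- Prüfer
    intro I' hFG hreg'
    by_cases hI' : I' = ⊤
    · subst hI'
      refine ⟨⟨1, Submodule.mem_top, Submonoid.one_mem _⟩, hFG, ?_⟩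
      intro N hN
      have htop : ((⊤ : Ideal B).map (algebraMap B (Localization.AtPrime N)))
          = Ideal.span {1} := by
        rw [Ideal.map_top, Ideal.span_singleton_one]
      exact ⟨⟨1, htop⟩⟩
    · -- I' proper : contract, factor, extend
      apply einv_isInvertible
      set I : Ideal A := I'.comap (algebraMap A B) with hIdef
      have hImap : I.map (algebraMap A B) = I' := IsLocalization.map_comap S B I'
      have hInet : I ≠ ⊤ := by
        intro h
        apply hI'
        rw [← hImap, h, Ideal.map_top]
      have hIreg : I.IsRegularIdeal := by
        obtain ⟨z, hzI', hznzd⟩ := hreg'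
        obtain ⟨⟨x, s⟩, hxs⟩ := IsLocalization.mk'_surjective S z
        dsimp only at hxs
        have hφx : algebraMap A B x ∈ I' := by
          rw [← IsLocalization.mk'_spec B x s, hxs]
          exact Ideal.mul_mem_right _ _ hzI'
        have hxnzd : x ∈ nonZeroDivisors A := by
          apply nzd_of_loc (B := B) S hS1
          rw [← IsLocalization.mk'_spec B x s, hxs]
          exact mul_mem hznzd ((IsLocalization.map_units B s).mem_nonZeroDivisors)
        exact ⟨x, Ideal.mem_comap.2 hφx, hxnzd⟩
      obtain ⟨J, L, hJinv, hLne, hLprop, hIeq⟩ := hisp I hInet hIreg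
      obtain ⟨r, hrI, hrnzd⟩ := hIreg
      have hHreg : ∀ H ∈ L, H.IsRegularIdeal := fun H hH =>
        ⟨r, (list_prod_le_of_mem hH) (Ideal.mul_le_right (hIeq ▸ hrI)), hrnzd⟩
      have hforms : ∀ X ∈ L.map (Ideal.map (algebraMap A B)),
          X = ⊤ ∨ X = M.map (algebraMap A B) := by
        intro X hX
        rw [List.mem_map] at hX
        obtain ⟨H, hH, rfl⟩ := hX
        by_cases hle : H ≤ M
        · exact Or.inr (lem_radical_map S M hSmem hmarot hdim hM H (hHreg H hH)
            (hLprop H hH).2 hle)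
        · exact Or.inl (lem_top_map S M hSmem hmarot H (hHreg H hH) hle)
      obtain ⟨k, hk⟩ := list_pow_form hforms
      have : I' = (J.map (algebraMap A B)) * (M.map (algebraMap A B)) ^ k := by
        rw [← hImap, hIeq, Ideal.map_mul, ← list_map_prod, hk]
      rw [this]
      exact einv_mul (einv_map S (isInvertible_einv hJinv)) (einv_pow hEM k)
  · -- non-idempotent
    intro h
    have h2 : (M.map (algebraMap A B)) * (M.map (algebraMap A B))
        = (M.map (algebraMap A B)) * ⊤ := by rw [Ideal.mul_top]; exact h
    exact lem_MB_proper S M hSmem (einv_cancel hEM h2)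

end MainArg


/-- If `A` is a Marot ISP-ring whose regular prime ideals are all maximal and `M` is a
regular maximal ideal, then the regular localization `A_(M)` is a Prüfer ring, and
`M·A_(M)` is invertible and not idempotent. -/
theorem isPrufer_regular_localization_of_marot_isISPRing {A : Type*} [CommRing A]
    (hmarot : IsMarotRing A) (hisp : IsISPRing A)
    (hdim : ∀ P : Ideal A, P.IsPrime → P.IsRegularIdeal → P.IsMaximal)
    (M : Ideal A) (hM : M.IsMaximal) (hMreg : M.IsRegularIdeal) :
    IsPruferRing
        (Localization (nonZeroDivisors A ⊓ @Ideal.primeCompl A _ M hM.isPrime)) ∧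
      (M.map (algebraMap A
          (Localization (nonZeroDivisors A ⊓ @Ideal.primeCompl A _ M hM.isPrime)))).IsInvertibleIdeal ∧
      M.map (algebraMap A
            (Localization (nonZeroDivisors A ⊓ @Ideal.primeCompl A _ M hM.isPrime))) *
          M.map (algebraMap A
            (Localization (nonZeroDivisors A ⊓ @Ideal.primeCompl A _ M hM.isPrime))) ≠
        M.map (algebraMap A
          (Localization (nonZeroDivisors A ⊓ @Ideal.primeCompl A _ M hM.isPrime))) := by
  have hSmem : ∀ x : A,
      x ∈ (nonZeroDivisors A ⊓ @Ideal.primeCompl A _ M hM.isPrime) ↔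
        x ∈ nonZeroDivisors A ∧ x ∉ M := by
    intro x
    rw [Submonoid.mem_inf]
    exact Iff.rfl
  exact main_general _ M hSmem hmarot hisp hdim hM hMreg
end
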